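/- arXiv:2301.05002 — 2 statements merged into one kernel-verified Lean document; each statement's English description precedes it below -/
import Mathlib

section
/- Let {xᵏ} be a sequence generated by the proximal gradient method and suppose Assumption A holds. If some subsequence {xᵏ}_{k∈K} converges to a point x* and ψ has the KL property at x*, then the entire sequence {xᵏ} converges to x*. -/
open Filter Topology Set Pointwise

variable {X : Type*} [NormedAddCommGroup X] [InnerProductSpace ℝ X] [FiniteDimensional ℝ X]

/-- The objective `ψ = f + φ` with extended-real values. -/
noncomputable def psi (f : X → ℝ) (φ : X → EReal) : X → EReal :=
  fun z => (f z : EReal) + φ z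

/-- The subproblem objective of the proximal gradient method at base point `x`
with stepsize parameter `γ`. -/
noncomputable def proxModel (f : X → ℝ) (φ : X → EReal) (x : X) (γ : ℝ) : X → EReal :=
  fun z => ((f x + (inner ℝ (gradient f x) (z - x) : ℝ) + γ / 2 * ‖z - x‖ ^ 2 : ℝ) : EReal) + φ z

/-- Fréchet (regular) subdifferential of `g` at `x`. -/
def frechetSubdiff (g : X → EReal) (x : X) : Set X :=
  {η | ∀ ε : ℝ, 0 < ε →
      ∀ᶠ y in nhds x, g x + (((inner ℝ η (y - x) : ℝ) - ε * ‖y - x‖ : ℝ) : EReal) ≤ g y}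

/-- Limiting (Mordukhovich) subdifferential of `g` at `x`. -/
def limitingSubdiff (g : X → EReal) (x : X) : Set X :=
  {η | ∃ u v : ℕ → X,
      Tendsto u atTop (nhds x) ∧ Tendsto (fun j => g (u j)) atTop (nhds (g x)) ∧
      Tendsto v atTop (nhds η) ∧ ∀ j, v j ∈ frechetSubdiff g (u j)}

/-- The sequences `x` (iterates) and `γ` (stepsizes) are generated by the proximal
gradient method with parameters `τ > 1`, `0 < γmin ≤ γmax`, `δ ∈ (0,1)`:
at every iteration `k` there are a chosen `γ0 ∈ [γmin, γmax]`, trial points `y j`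
(each a global minimizer of the subproblem with stepsize `τ ^ j * γ0`), and a first
index `i` at which the acceptance criterion holds; then `γ k = τ ^ i * γ0` and
`x (k+1) = y i`. -/
structure ProxGrad (f : X → ℝ) (φ : X → EReal) (τ γmin γmax δ : ℝ)
    (x : ℕ → X) (γ : ℕ → ℝ) : Prop where
  htau : 1 < τ
  hgmin : 0 < γmin
  hgmm : γmin ≤ γmax
  hdelta0 : 0 < δ
  hdelta1 : δ < 1
  hx0 : φ (x 0) ≠ ⊤
  step : ∀ k : ℕ, ∃ (γ0 : ℝ) (i : ℕ) (y : ℕ → X),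
      γmin ≤ γ0 ∧ γ0 ≤ γmax ∧
      (∀ j ≤ i, ∀ z : X,
        proxModel f φ (x k) (τ ^ j * γ0) (y j) ≤ proxModel f φ (x k) (τ ^ j * γ0) z) ∧
      psi f φ (y i) ≤
        psi f φ (x k) - ((δ * (τ ^ i * γ0) / 2 * ‖y i - x k‖ ^ 2 : ℝ) : EReal) ∧
      (∀ j < i, ¬ psi f φ (y j) ≤
        psi f φ (x k) - ((δ * (τ ^ j * γ0) / 2 * ‖y j - x k‖ ^ 2 : ℝ) : EReal)) ∧
      γ k = τ ^ i * γ0 ∧ x (k + 1) = y i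

/-- Assumption A: `ψ` is bounded below on `dom φ`, `φ` is bounded below by an affine
function, and `∇f` is locally Lipschitz continuous. -/
def AssumptionA (f : X → ℝ) (φ : X → EReal) : Prop :=
  (∃ m : ℝ, ∀ z : X, φ z ≠ ⊤ → (m : EReal) ≤ psi f φ z) ∧
  (∃ a : X, ∃ b : ℝ, ∀ z : X, (((inner ℝ a z : ℝ) + b : ℝ) : EReal) ≤ φ z) ∧
  LocallyLipschitz (gradient f)

/-- `g` has the Kurdyka–Łojasiewicz property at `xs` with constant `η` and
desingularization function `χ`. -/
def HasKLProperty (g : X → EReal) (xs : X) (η : ℝ) (χ : ℝ → ℝ) : Prop :=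
  0 < η ∧ (limitingSubdiff g xs).Nonempty ∧
  ContinuousOn χ (Icc 0 η) ∧ ConcaveOn ℝ (Icc 0 η) χ ∧
  (∀ t ∈ Icc (0 : ℝ) η, 0 ≤ χ t) ∧ χ 0 = 0 ∧
  (∀ t ∈ Ioo (0 : ℝ) η, DifferentiableAt ℝ χ t ∧ 0 < deriv χ t) ∧
  ContinuousOn (deriv χ) (Ioo 0 η) ∧
  ∃ U ∈ nhds xs, ∀ y ∈ U, g xs < g y → g y < g xs + (η : EReal) →
    1 ≤ deriv χ ((g y - g xs).toReal) * Metric.infDist 0 (limitingSubdiff g y)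

set_option linter.unusedSectionVars false
set_option maxHeartbeats 1000000
open scoped NNReal

section AuxPG

variable {f : X → ℝ} {φ : X → EReal}

lemma psi_coe (hφbot : ∀ z, φ z ≠ ⊥) {z : X} (hz : φ z ≠ ⊤) :
    psi f φ z = ((f z + (φ z).toReal : ℝ) : EReal) := by
  have : ((φ z).toReal : EReal) = φ z := EReal.coe_toReal hz (hφbot z)
  rw [psi, ← this]
  exact (EReal.coe_add _ _).symm

lemma psi_ne_top (hφbot : ∀ z, φ z ≠ ⊥) {z : X} (hz : φ z ≠ ⊤) : psi f φ z ≠ ⊤ := by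
  rw [psi_coe hφbot hz]; exact EReal.coe_ne_top _

lemma phi_ne_top_of_psi_ne_top {z : X} (hz : psi f φ z ≠ ⊤) : φ z ≠ ⊤ := by
  intro h; rw [psi, h] at hz; simp at hz

/-- Real form of global minimality of the prox subproblem. -/
lemma min_real (hφbot : ∀ z, φ z ≠ ⊥) {x0 y : X} {γv : ℝ}
    (hx0 : φ x0 ≠ ⊤)
    (hmin : ∀ z, proxModel f φ x0 γv y ≤ proxModel f φ x0 γv z) :
    φ y ≠ ⊤ ∧ ∀ z : X, φ z ≠ ⊤ →
      (inner ℝ (gradient f x0) (y - x0) : ℝ) + γv/2*‖y-x0‖^2 + (φ y).toReal ≤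
      (inner ℝ (gradient f x0) (z - x0) : ℝ) + γv/2*‖z-x0‖^2 + (φ z).toReal := by
  have hbase := hmin x0
  have hbase' : proxModel f φ x0 γv x0 = ((f x0 + (φ x0).toReal : ℝ) : EReal) := by
    simp only [proxModel, sub_self, inner_zero_right, norm_zero]
    rw [← EReal.coe_toReal hx0 (hφbot x0), ← EReal.coe_add]
    norm_num
  have hytop : φ y ≠ ⊤ := by
    intro h
    rw [hbase', proxModel, h, EReal.coe_add_top] at hbase
    exact (EReal.coe_ne_top _) (top_le_iff.mp hbase)
  refine ⟨hytop, fun z hz => ?_⟩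
  have h := hmin z
  rw [proxModel, proxModel, ← EReal.coe_toReal hytop (hφbot y), ← EReal.coe_toReal hz (hφbot z),
    ← EReal.coe_add, ← EReal.coe_add, EReal.coe_le_coe_iff] at h
  linarith

/-- Quadratic upper bound from Lipschitz gradient on a convex set. -/
lemma quad_bound (hf : ContDiff ℝ 1 f) {s : Set X} (hs : Convex ℝ s)
    {L : ℝ≥0} (hL : LipschitzOnWith L (gradient f) s) {x y : X} (hx : x ∈ s) (hy : y ∈ s) :
    f y ≤ f x + (inner ℝ (gradient f x) (y - x) : ℝ) + L * ‖y - x‖ ^ 2 := by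
  set c := gradient f x with hc
  set g : X → ℝ := fun z => f z - (innerSL ℝ c) z with hg
  have hdiff : ∀ z ∈ segment ℝ x y, DifferentiableAt ℝ g z := fun z _ =>
    ((hf.differentiable one_ne_zero) z).sub (innerSL ℝ c).differentiableAt
  have hfd : ∀ z : X, fderiv ℝ f z = InnerProductSpace.toDual ℝ X (gradient f z) := by
    intro z
    exact (((hf.differentiable one_ne_zero) z).hasGradientAt).hasFDerivAt.fderiv
  have hisl : innerSL ℝ c = InnerProductSpace.toDual ℝ X c := by
    ext w; simp [InnerProductSpace.toDual_apply_apply]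
  have hbound : ∀ z ∈ segment ℝ x y, ‖fderiv ℝ g z‖ ≤ (L : ℝ) * ‖y - x‖ := by
    intro z hz
    have hzx : ‖z - x‖ ≤ ‖y - x‖ := by
      obtain ⟨p, q, hp, hq, hpq, rfl⟩ := hz
      have hzz : p • x + q • y - x = q • (y - x) := by
        have hp1 : p = 1 - q := by linarith
        rw [hp1, sub_smul, one_smul, smul_sub]; abel
      rw [hzz, norm_smul, Real.norm_eq_abs, abs_of_nonneg hq]
      nlinarith [norm_nonneg (y - x)]
    have hgz : fderiv ℝ g z = fderiv ℝ f z - innerSL ℝ c := by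
      rw [hg]
      rw [fderiv_fun_sub ((hf.differentiable one_ne_zero) z) (innerSL ℝ c).differentiableAt]
      rw [(innerSL ℝ c).fderiv]
    rw [hgz, hfd, hisl, ← map_sub]
    rw [LinearIsometryEquiv.norm_map]
    have hzs : z ∈ s := hs.segment_subset hx hy hz
    have hlip : ‖gradient f z - c‖ ≤ (L : ℝ) * ‖z - x‖ := by
      have := hL.dist_le_mul z hzs x hx
      rw [dist_eq_norm, dist_eq_norm] at this; exact this
    calc ‖gradient f z - c‖ ≤ (L : ℝ) * ‖z - x‖ := hlip
      _ ≤ (L : ℝ) * ‖y - x‖ := by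
          exact mul_le_mul_of_nonneg_left hzx L.coe_nonneg
  have key := Convex.norm_image_sub_le_of_norm_fderiv_le hdiff hbound (convex_segment x y)
    (left_mem_segment ℝ x y) (right_mem_segment ℝ x y)
  have hgyx : g y - g x = f y - f x - (inner ℝ c (y - x) : ℝ) := by
    simp only [hg, innerSL_apply_apply]
    rw [inner_sub_right]
    ring
  have h2 : f y - f x - (inner ℝ c (y - x) : ℝ) ≤ (L:ℝ) * ‖y - x‖ * ‖y - x‖ := by
    rw [← hgyx]
    exact (le_abs_self _).trans (by rw [← Real.norm_eq_abs]; exact key)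
  nlinarith [h2]

end AuxPG

section AuxPG2

variable {f : X → ℝ} {φ : X → EReal}

/-- If the stepsize is large enough (relative to a Lipschitz bound on the gradient along a
convex set containing both points), the acceptance test passes. -/
lemma accept_large (hf : ContDiff ℝ 1 f) (hφbot : ∀ z, φ z ≠ ⊥) {s : Set X}
    (hs : Convex ℝ s) {L : ℝ≥0} (hL : LipschitzOnWith L (gradient f) s)
    {x0 y : X} {γv δ : ℝ} (hx0 : φ x0 ≠ ⊤)
    (hx0s : x0 ∈ s) (hys : y ∈ s) (hγ : (L:ℝ) ≤ (1 - δ) * γv / 2)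
    (hmin : ∀ z, proxModel f φ x0 γv y ≤ proxModel f φ x0 γv z) :
    psi f φ y ≤ psi f φ x0 - ((δ * γv / 2 * ‖y - x0‖^2 : ℝ) : EReal) := by
  obtain ⟨hyt, hm⟩ := min_real hφbot hx0 hmin
  have h1 := hm x0 hx0
  simp only [sub_self, inner_zero_right, norm_zero] at h1
  have h2 := quad_bound hf hs hL hx0s hys
  rw [psi_coe hφbot hyt, psi_coe hφbot hx0, ← EReal.coe_sub, EReal.coe_le_coe_iff]
  nlinarith [sq_nonneg ‖y - x0‖]

/-- Localization of trial points: for large stepsizes the global minimizer of the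
subproblem stays close to the base point. -/
lemma trial_close (hφbot : ∀ z, φ z ≠ ⊥) {a : X} {b : ℝ}
    (haff : ∀ z : X, (((inner ℝ a z : ℝ) + b : ℝ) : EReal) ≤ φ z)
    {x0 y : X} {γv A B s : ℝ} (hx0 : φ x0 ≠ ⊤)
    (hmin : ∀ z, proxModel f φ x0 γv y ≤ proxModel f φ x0 γv z) (hs : 0 < s)
    (hA : (φ x0).toReal - b - (inner ℝ a x0 : ℝ) ≤ A)
    (hB : ‖a‖ + ‖gradient f x0‖ ≤ B) (hB0 : 0 ≤ B) (hA0 : 0 ≤ A) (hγ : 0 < γv)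
    (hγs : 2*A + 2*B*s + s^2 ≤ γv * s^2) : ‖y - x0‖ ≤ s := by
  obtain ⟨hyt, hm⟩ := min_real hφbot hx0 hmin
  have h1 := hm x0 hx0
  simp only [sub_self, inner_zero_right, norm_zero] at h1
  -- affine lower bound on φ y
  have haffy : (inner ℝ a y : ℝ) + b ≤ (φ y).toReal := by
    have := haff y
    rw [← EReal.coe_toReal hyt (hφbot y), EReal.coe_le_coe_iff] at this
    exact this
  have hay : (inner ℝ a y : ℝ) = (inner ℝ a x0 : ℝ) + (inner ℝ a (y - x0) : ℝ) := by
    rw [← inner_add_right]; norm_num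
  have hia : -(inner ℝ a (y - x0) : ℝ) ≤ ‖a‖ * ‖y - x0‖ := by
    have := real_inner_le_norm a (x0 - y)
    have h' : (inner ℝ a (x0 - y) : ℝ) = -(inner ℝ a (y - x0) : ℝ) := by
      rw [show x0 - y = -(y - x0) by abel, inner_neg_right]
    rw [h', norm_sub_rev] at this
    exact this
  have hig : -(inner ℝ (gradient f x0) (y - x0) : ℝ) ≤ ‖gradient f x0‖ * ‖y - x0‖ := by
    have := real_inner_le_norm (gradient f x0) (x0 - y)
    have h' : (inner ℝ (gradient f x0) (x0 - y) : ℝ) = -(inner ℝ (gradient f x0) (y - x0) : ℝ) := by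
      rw [show x0 - y = -(y - x0) by abel, inner_neg_right]
    rw [h', norm_sub_rev] at this
    exact this
  -- γv/2 t² ≤ A + B t
  set t := ‖y - x0‖ with ht
  have ht0 : 0 ≤ t := norm_nonneg _
  have hkey : γv/2 * t^2 ≤ A + B * t := by
    have hBt : (‖a‖ + ‖gradient f x0‖) * t ≤ B * t := mul_le_mul_of_nonneg_right hB ht0
    nlinarith [hia, hig, haffy, h1, hA]
  by_contra hcon
  push_neg at hcon
  have e : t*(γv*s^2 - 2*B*s - 2*A) = (t-s)*(-2*A) + s*(γv*t^2 - 2*B*t - 2*A) + γv*s*t*(s-t) := by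
    ring
  have h1' : (t-s)*(-2*A) ≤ 0 := by nlinarith
  have h2' : s*(γv*t^2 - 2*B*t - 2*A) ≤ 0 := by nlinarith
  have h3' : γv*s*t*(s-t) ≤ 0 := by
    have hpos : 0 < γv*s*t := mul_pos (mul_pos hγ hs) (hs.trans hcon)
    nlinarith
  have h4' : t*s^2 ≤ t*(γv*s^2 - 2*B*s - 2*A) := by nlinarith
  nlinarith [mul_pos (hs.trans hcon) (mul_pos hs hs)]

/-- The relative-error subgradient: membership in the limiting subdifferential. -/
lemma subgrad_mem (hf : ContDiff ℝ 1 f) (hφbot : ∀ z, φ z ≠ ⊥)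
    {x0 x1 : X} {γv : ℝ} (hγ : 0 < γv) (hx0 : φ x0 ≠ ⊤)
    (hmin : ∀ z, proxModel f φ x0 γv x1 ≤ proxModel f φ x0 γv z) :
    gradient f x1 - gradient f x0 - γv • (x1 - x0) ∈ limitingSubdiff (psi f φ) x1 := by
  obtain ⟨h1top, hm⟩ := min_real hφbot hx0 hmin
  set v := gradient f x1 - gradient f x0 - γv • (x1 - x0) with hv
  have hfrechet : v ∈ frechetSubdiff (psi f φ) x1 := by
    intro ε hε
    have hFd : HasFDerivAt f (InnerProductSpace.toDual ℝ X (gradient f x1)) x1 :=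
      (((hf.differentiable one_ne_zero) x1).hasGradientAt).hasFDerivAt
    have hlo := hFd.isLittleO.bound (show (0:ℝ) < ε/2 by linarith)
    have hball : Metric.closedBall x1 (ε/γv) ∈ 𝓝 x1 :=
      Metric.closedBall_mem_nhds _ (by positivity)
    filter_upwards [hlo, hball] with z hz1 hz2
    by_cases hzt : φ z = ⊤
    · have : psi f φ z = ⊤ := by rw [psi, hzt, EReal.coe_add_top]
      rw [this]; exact le_top
    · rw [psi_coe hφbot h1top, psi_coe hφbot hzt, ← EReal.coe_add, EReal.coe_le_coe_iff]
      set t := ‖z - x1‖ with htd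
      have ht0 : 0 ≤ t := norm_nonneg _
      -- minimality inequality at z
      have hz3 := hm z hzt
      -- decompositions
      have hdec : z - x0 = (z - x1) + (x1 - x0) := by abel
      have hnorm : ‖z - x0‖^2 = t^2 + 2*(inner ℝ (z - x1) (x1 - x0) : ℝ) + ‖x1 - x0‖^2 := by
        rw [hdec]; exact norm_add_sq_real _ _
      have hinner : (inner ℝ (gradient f x0) (z - x0) : ℝ) =
          (inner ℝ (gradient f x0) (z - x1) : ℝ) + (inner ℝ (gradient f x0) (x1 - x0) : ℝ) := by
        rw [hdec, inner_add_right]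
      have hvapp : (inner ℝ v (z - x1) : ℝ) = (inner ℝ (gradient f x1) (z - x1) : ℝ)
          - (inner ℝ (gradient f x0) (z - x1) : ℝ) - γv * (inner ℝ (x1 - x0) (z - x1) : ℝ) := by
        rw [hv, inner_sub_left, inner_sub_left, real_inner_smul_left]
      have hcomm : (inner ℝ (z - x1) (x1 - x0) : ℝ) = (inner ℝ (x1 - x0) (z - x1) : ℝ) :=
        real_inner_comm _ _
      -- f lower bound
      have hfb : f x1 + (inner ℝ (gradient f x1) (z - x1) : ℝ) - ε/2 * t ≤ f z := by
        have habs : |f z - f x1 - (inner ℝ (gradient f x1) (z - x1) : ℝ)| ≤ ε/2 * t := by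
          have := hz1
          rw [Real.norm_eq_abs] at this
          have happ : (InnerProductSpace.toDual ℝ X (gradient f x1)) (z - x1)
              = (inner ℝ (gradient f x1) (z - x1) : ℝ) := InnerProductSpace.toDual_apply_apply
          rw [happ] at this
          exact this
        have := abs_le.mp habs
        linarith [this.1]
      -- quadratic term small
      have hquad : γv/2 * t^2 ≤ ε/2 * t := by
        have hzd : t ≤ ε/γv := by
          have := Metric.mem_closedBall.mp hz2
          rw [dist_eq_norm] at this; exact this
        have : γv * t ≤ ε := by
          rw [le_div_iff₀ hγ] at hzd; linarith [hzd]
        nlinarith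
      nlinarith [hz3, hfb, hquad, hnorm, hinner, hvapp, hcomm]
  exact ⟨fun _ => x1, fun _ => v, tendsto_const_nhds, tendsto_const_nhds,
    tendsto_const_nhds, fun _ => hfrechet⟩

end AuxPG2

section MainAux

variable {f : X → ℝ} {φ : X → EReal} {τ γmin γmax δ : ℝ} {x : ℕ → X} {γ : ℕ → ℝ}

/-- Packaged facts about each step of the proximal gradient method. -/
lemma step_facts (halg : ProxGrad f φ τ γmin γmax δ x γ) (k : ℕ) :
    γmin ≤ γ k ∧
    (∀ z, proxModel f φ (x k) (γ k) (x (k+1)) ≤ proxModel f φ (x k) (γ k) z) ∧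
    psi f φ (x (k+1)) ≤ psi f φ (x k) - ((δ * γ k / 2 * ‖x (k+1) - x k‖^2 : ℝ) : EReal) := by
  obtain ⟨γ0, i, y, hγ0min, hγ0max, hmins, hacc, hfail, hγk, hxk1⟩ := halg.step k
  have hτ1 : (1:ℝ) ≤ τ ^ i := one_le_pow₀ (le_of_lt halg.htau)
  have hγ0pos : 0 < γ0 := lt_of_lt_of_le halg.hgmin hγ0min
  refine ⟨?_, ?_, ?_⟩
  · rw [hγk]
    calc γmin ≤ γ0 := hγ0min
      _ ≤ τ^i * γ0 := le_mul_of_one_le_left (le_of_lt hγ0pos) hτ1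
  · intro z; rw [hxk1, hγk]; exact hmins i le_rfl z
  · rw [hxk1, hγk]; exact hacc

lemma phi_iter_ne_top (halg : ProxGrad f φ τ γmin γmax δ x γ) (hφbot : ∀ z, φ z ≠ ⊥) :
    ∀ k, φ (x k) ≠ ⊤ := by
  intro k
  induction k with
  | zero => exact halg.hx0
  | succ n ih =>
    have h := (step_facts halg n).2.2
    rw [psi_coe hφbot ih, ← EReal.coe_sub] at h
    exact phi_ne_top_of_psi_ne_top (ne_top_of_le_ne_top (EReal.coe_ne_top _) h)

lemma sqrt_am_gm {d a b : ℝ} (hd : 0 ≤ d) (ha : 0 ≤ a) (hb : 0 ≤ b) (h : d^2 ≤ a*b) :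
    d ≤ a/2 + b/2 := by
  nlinarith [sq_nonneg (a-b), sq_nonneg (a+b-2*d)]

end MainAux

/-- if a subsequence converges to `x*` and `ψ` has the KL property
at `x*`, then the entire sequence converges to `x*`. -/
theorem statement13
    (f : X → ℝ) (φ : X → EReal)
    (hf : ContDiff ℝ 1 f) (hφlsc : LowerSemicontinuous φ)
    (hφbot : ∀ z : X, φ z ≠ ⊥) (hproper : ∃ z : X, φ z ≠ ⊤)
    (τ γmin γmax δ : ℝ) (x : ℕ → X) (γ : ℕ → ℝ)
    (halg : ProxGrad f φ τ γmin γmax δ x γ)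
    (hA : AssumptionA f φ)
    (xs : X) (σ : ℕ → ℕ) (hσ : StrictMono σ)
    (hconv : Tendsto (fun k => x (σ k)) atTop (nhds xs))
    (η : ℝ) (χ : ℝ → ℝ) (hKL : HasKLProperty (psi f φ) xs η χ) :
    Tendsto x atTop (nhds xs) := by
  classical
  obtain ⟨⟨m, hmb⟩, ⟨a, b, haff⟩, hlip⟩ := hA
  -- step facts
  have hstep := step_facts halg
  have hγpos : ∀ k, 0 < γ k := fun k => lt_of_lt_of_le halg.hgmin (hstep k).1
  have hfin : ∀ k, φ (x k) ≠ ⊤ := phi_iter_ne_top halg hφbot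
  obtain ⟨F, hF⟩ : ∃ F : ℕ → ℝ, ∀ k, F k = f (x k) + (φ (x k)).toReal :=
    ⟨_, fun _ => rfl⟩
  have hψF : ∀ k, psi f φ (x k) = ((F k : ℝ) : EReal) := fun k => by
    rw [hF k]; exact psi_coe hφbot (hfin k)
  obtain ⟨d, hd⟩ : ∃ d : ℕ → ℝ, ∀ k, d k = ‖x (k+1) - x k‖ := ⟨_, fun _ => rfl⟩
  have hd0 : ∀ k, 0 ≤ d k := fun k => by rw [hd k]; exact norm_nonneg _
  have hdesc : ∀ k, F (k+1) + δ * γ k / 2 * (d k)^2 ≤ F k := by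
    intro k
    have h := (hstep k).2.2
    rw [hψF, hψF, ← EReal.coe_sub, EReal.coe_le_coe_iff] at h
    rw [hd k]; linarith
  have hFsucc : ∀ k, F (k+1) ≤ F k := by
    intro k
    have h := hdesc k
    have h2 : 0 ≤ δ * γ k / 2 * (d k)^2 := by
      have := hγpos k
      have := halg.hdelta0
      positivity
    linarith
  have hFanti : Antitone F := antitone_nat_of_succ_le hFsucc
  have hFlb : ∀ k, m ≤ F k := by
    intro k
    have := hmb (x k) (hfin k)
    rw [hψF, EReal.coe_le_coe_iff] at this
    exact this
  set Fs : ℝ := ⨅ k, F k with hFsdef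
  have hFtend : Tendsto F atTop (𝓝 Fs) :=
    tendsto_atTop_ciInf hFanti ⟨m, by rintro r ⟨k, rfl⟩; exact hFlb k⟩
  have hFge : ∀ k, Fs ≤ F k := fun k => hFanti.le_of_tendsto hFtend k
  have hFtend1 : Tendsto (fun k => F (k+1)) atTop (𝓝 Fs) :=
    hFtend.comp (tendsto_add_atTop_nat 1)
  have hδγ : 0 < δ * γmin / 2 := by
    have := halg.hdelta0; have := halg.hgmin; positivity
  have hdesc' : ∀ k, δ * γmin / 2 * (d k)^2 ≤ F k - F (k+1) := by
    intro k
    have h := hdesc k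
    have h1 := (hstep k).1
    have h2 : δ * γmin / 2 * (d k)^2 ≤ δ * γ k / 2 * (d k)^2 := by
      nlinarith [mul_nonneg (mul_nonneg (le_of_lt halg.hdelta0) (sub_nonneg.mpr h1))
        (sq_nonneg (d k))]
    linarith
  have hdtend : Tendsto d atTop (𝓝 0) := by
    have hsq : Tendsto (fun k => (d k)^2) atTop (𝓝 0) := by
      apply squeeze_zero (fun k => sq_nonneg _)
        (g := fun k => (2/(δ*γmin)) * (F k - F (k+1)))
      · intro k
        have h0 : 0 < δ*γmin := mul_pos halg.hdelta0 halg.hgmin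
        have h := mul_le_mul_of_nonneg_left (hdesc' k) (le_of_lt (div_pos two_pos h0))
        calc (d k)^2 = 2/(δ*γmin) * (δ*γmin/2*(d k)^2) := by
              rw [← mul_assoc, div_mul_div_comm, mul_comm 2 (δ*γmin),
                div_self (ne_of_gt (by linarith)), one_mul]
          _ ≤ 2/(δ*γmin) * (F k - F (k+1)) := h
      · have : Tendsto (fun k => F k - F (k+1)) atTop (𝓝 (Fs - Fs)) := hFtend.sub hFtend1
        rw [sub_self] at this
        simpa using this.const_mul (2/(δ*γmin))
    have h2 := (Real.continuous_sqrt.tendsto 0).comp hsq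
    rw [Real.sqrt_zero] at h2
    have h3 : Tendsto (fun k => Real.sqrt ((d k)^2)) atTop (𝓝 0) := h2
    have heq : (fun k => Real.sqrt ((d k)^2)) = d := funext fun k => Real.sqrt_sq (hd0 k)
    rwa [heq] at h3
  -- local Lipschitz data around xs
  obtain ⟨Lnn, t, htmem, hLipt⟩ := hlip xs
  obtain ⟨ρ, hρpos, hρsub⟩ := Metric.nhds_basis_closedBall.mem_iff.mp htmem
  have hLipB : LipschitzOnWith Lnn (gradient f) (Metric.closedBall xs ρ) := hLipt.mono hρsub
  set L : ℝ := (Lnn : ℝ) with hLdef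
  have hL0 : 0 ≤ L := Lnn.coe_nonneg
  have hcomp : IsCompact (Metric.closedBall xs ρ) := isCompact_closedBall xs ρ
  have hgradcont : Continuous (gradient f) := by
    have hc : Continuous (fderiv ℝ f) := hf.continuous_fderiv (by norm_num)
    exact (InnerProductSpace.toDual ℝ X).symm.continuous.comp hc
  obtain ⟨G, hG⟩ := hcomp.exists_bound_of_continuousOn hgradcont.continuousOn
  obtain ⟨Fb, hFb⟩ := hcomp.exists_bound_of_continuousOn hf.continuous.continuousOn
  have hxsball : xs ∈ Metric.closedBall xs ρ := Metric.mem_closedBall_self hρpos.le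
  have hG0 : 0 ≤ G := le_trans (norm_nonneg _) (hG xs hxsball)
  have hFb0 : 0 ≤ Fb := le_trans (norm_nonneg _) (hFb xs hxsball)
  have hhalf : Metric.closedBall xs (ρ/2) ⊆ Metric.closedBall xs ρ :=
    Metric.closedBall_subset_closedBall (by linarith)
  -- uniform constants for trial-point localization
  set A1 : ℝ := max (F 0 + Fb - b + ‖a‖*(‖xs‖+ρ)) 0 with hA1def
  have hA10 : 0 ≤ A1 := le_max_right _ _
  set B1 : ℝ := ‖a‖ + G with hB1def
  have hB10 : 0 ≤ B1 := add_nonneg (norm_nonneg _) hG0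
  set s1 : ℝ := ρ/2 with hs1def
  have hs1pos : 0 < s1 := half_pos hρpos
  set γhat : ℝ := (2*A1 + 2*B1*s1 + s1^2)/s1^2 with hγhatdef
  set Γ1 : ℝ := max γhat (2*L/(1-δ)) with hΓ1def
  set Γ : ℝ := max γmax (τ * Γ1) with hΓdef
  have hΓpos : 0 < Γ := lt_of_lt_of_le (lt_of_lt_of_le halg.hgmin halg.hgmm) (le_max_left _ _)
  -- uniform bounds at points of the half ball
  have hAbound : ∀ k, x k ∈ Metric.closedBall xs (ρ/2) →
      (φ (x k)).toReal - b - (inner ℝ a (x k) : ℝ) ≤ A1 := by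
    intro k hk
    have hxk : x k ∈ Metric.closedBall xs ρ := hhalf hk
    have h1 : (φ (x k)).toReal = F k - f (x k) := by rw [hF k]; ring
    have h2 : F k ≤ F 0 := hFanti (Nat.zero_le k)
    have h3 : -f (x k) ≤ Fb := by
      have := hFb (x k) hxk
      rw [Real.norm_eq_abs] at this
      linarith [neg_abs_le (f (x k)), abs_nonneg (f (x k))]
    have h4 : -(inner ℝ a (x k) : ℝ) ≤ ‖a‖*(‖xs‖+ρ) := by
      have h5 := real_inner_le_norm a (-(x k))
      rw [inner_neg_right] at h5
      have h6 : ‖x k‖ ≤ ‖xs‖ + ρ := by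
        have : ‖x k - xs‖ ≤ ρ := by
          have := Metric.mem_closedBall.mp hxk
          rwa [dist_eq_norm] at this
        calc ‖x k‖ = ‖xs + (x k - xs)‖ := by congr 1; abel
          _ ≤ ‖xs‖ + ‖x k - xs‖ := norm_add_le _ _
          _ ≤ ‖xs‖ + ρ := by linarith
      have h7 : ‖a‖ * ‖-(x k)‖ ≤ ‖a‖*(‖xs‖+ρ) := by
        rw [norm_neg]
        exact mul_le_mul_of_nonneg_left h6 (norm_nonneg a)
      linarith
    have : (φ (x k)).toReal - b - (inner ℝ a (x k) : ℝ) ≤ F 0 + Fb - b + ‖a‖*(‖xs‖+ρ) := by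
      rw [h1]; linarith
    exact this.trans (le_max_left _ _)
  have hBbound : ∀ k, x k ∈ Metric.closedBall xs (ρ/2) →
      ‖a‖ + ‖gradient f (x k)‖ ≤ B1 := by
    intro k hk
    exact add_le_add_right (hG (x k) (hhalf hk)) _
  -- stepsize bound on the half ball
  have hγΓ : ∀ k, x k ∈ Metric.closedBall xs (ρ/2) → γ k ≤ Γ := by
    intro k hk
    obtain ⟨γ0, i, y, hγ0min, hγ0max, hmins, hacc, hfail, hγk, hxk1⟩ := halg.step k
    have hγ0pos : 0 < γ0 := lt_of_lt_of_le halg.hgmin hγ0min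
    have hτpos : (0:ℝ) < τ := lt_trans one_pos halg.htau
    cases i with
    | zero =>
      rw [hγk, pow_zero, one_mul]
      exact hγ0max.trans (le_max_left _ _)
    | succ n =>
      have hfailn := hfail n (Nat.lt_succ_self n)
      have hτn : τ^n*γ0 < Γ1 := by
        by_contra hge
        push_neg at hge
        have hγvpos : 0 < τ^n*γ0 := mul_pos (pow_pos hτpos n) hγ0pos
        have hγs : 2*A1 + 2*B1*s1 + s1^2 ≤ (τ^n*γ0) * s1^2 := by
          have h1 : γhat ≤ τ^n*γ0 := le_trans (le_max_left _ _) hge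
          have h2 : γhat * s1^2 = 2*A1 + 2*B1*s1 + s1^2 := by
            rw [hγhatdef]
            field_simp
          calc 2*A1 + 2*B1*s1 + s1^2 = γhat * s1^2 := h2.symm
            _ ≤ (τ^n*γ0) * s1^2 := by nlinarith [sq_nonneg s1, hs1pos]
        have hclose : ‖y n - x k‖ ≤ s1 :=
          trial_close hφbot haff (hfin k) (hmins n (Nat.le_succ n))
            hs1pos (hAbound k hk) (hBbound k hk) hB10 hA10 hγvpos hγs
        have hyball : y n ∈ Metric.closedBall xs ρ := by
          rw [Metric.mem_closedBall]
          calc dist (y n) xs ≤ dist (y n) (x k) + dist (x k) xs := dist_triangle _ _ _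
            _ ≤ s1 + ρ/2 := by
                have h1 : dist (y n) (x k) ≤ s1 := by rw [dist_eq_norm]; exact hclose
                have h2 := Metric.mem_closedBall.mp hk
                linarith
            _ = ρ := by rw [hs1def]; ring
        have hγL : (L:ℝ) ≤ (1 - δ) * (τ^n*γ0) / 2 := by
          have h1 : 2*L/(1-δ) ≤ τ^n*γ0 := le_trans (le_max_right _ _) hge
          have h2 : 0 < 1 - δ := by linarith [halg.hdelta1]
          rw [div_le_iff₀ h2] at h1
          linarith
        have hacc' := accept_large hf hφbot (convex_closedBall xs ρ) hLipB (hfin k)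
          (hhalf hk) hyball hγL (hmins n (Nat.le_succ n))
        exact hfailn hacc'
      rw [hγk, pow_succ]
      have : τ^(n+1)*γ0 = τ * (τ^n*γ0) := by rw [pow_succ]; ring
      calc τ^n*τ*γ0 = τ * (τ^n*γ0) := by ring
        _ ≤ τ * Γ1 := by nlinarith [hτn, hτpos]
        _ ≤ Γ := le_max_right _ _
  -- convergence of the successor subsequence
  have hσtend : Tendsto σ atTop atTop := hσ.tendsto_atTop
  have hx1conv : Tendsto (fun j => x (σ j + 1)) atTop (𝓝 xs) := by
    rw [tendsto_iff_dist_tendsto_zero]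
    apply squeeze_zero (fun j => dist_nonneg)
      (g := fun j => d (σ j) + dist (x (σ j)) xs)
    · intro j
      have hdd : dist (x (σ j + 1)) (x (σ j)) = d (σ j) := by
        rw [hd (σ j), dist_eq_norm]
      calc dist (x (σ j + 1)) xs
          ≤ dist (x (σ j + 1)) (x (σ j)) + dist (x (σ j)) xs := dist_triangle _ _ _
        _ = d (σ j) + dist (x (σ j)) xs := by rw [hdd]
    · have h1 : Tendsto (fun j => d (σ j)) atTop (𝓝 0) := hdtend.comp hσtend
      have h2 : Tendsto (fun j => dist (x (σ j)) xs) atTop (𝓝 0) :=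
        tendsto_iff_dist_tendsto_zero.mp hconv
      simpa using h1.add h2
  -- φ along the iterates, as reals
  have hφtoReal : ∀ k, φ (x k) = (((F k - f (x k)) : ℝ) : EReal) := by
    intro k
    rw [← EReal.coe_toReal (hfin k) (hφbot (x k))]
    congr 1
    rw [hF k]; ring
  have hc2tend : Tendsto (fun j => F (σ j + 1) - f (x (σ j + 1))) atTop (𝓝 (Fs - f xs)) := by
    apply Tendsto.sub
    · exact hFtend.comp ((tendsto_add_atTop_nat 1).comp hσtend)
    · exact (hf.continuous.tendsto xs).comp hx1conv
  -- lower semicontinuity bound at xs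
  have hφxs_le : φ xs ≤ (((Fs - f xs) : ℝ) : EReal) := by
    by_contra hgt
    push_neg at hgt
    obtain ⟨c, hc1, hc2⟩ := EReal.lt_iff_exists_real_btwn.mp hgt
    have hlsc := hφlsc xs (c : EReal) hc2
    have hev : ∀ᶠ j in atTop, (c : EReal) < φ (x (σ j + 1)) := hx1conv.eventually hlsc
    have hev2 : ∀ᶠ j in atTop, c ≤ F (σ j + 1) - f (x (σ j + 1)) := by
      filter_upwards [hev] with j hj
      rw [hφtoReal (σ j + 1), EReal.coe_lt_coe_iff] at hj
      exact hj.le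
    have hle := ge_of_tendsto hc2tend hev2
    rw [EReal.coe_lt_coe_iff] at hc1
    linarith
  have hφxs_ne_top : φ xs ≠ ⊤ := ne_top_of_le_ne_top (EReal.coe_ne_top _) hφxs_le
  have hφxs_real : (φ xs).toReal ≤ Fs - f xs := by
    rw [← EReal.coe_le_coe_iff, EReal.coe_toReal hφxs_ne_top (hφbot xs)]
    exact hφxs_le
  -- upper bound via minimality of the subproblem
  have hFs_le : Fs ≤ f xs + (φ xs).toReal := by
    have hballev : ∀ᶠ j in atTop, x (σ j) ∈ Metric.closedBall xs (ρ/2) :=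
      hconv.eventually (Metric.closedBall_mem_nhds xs (half_pos hρpos))
    have hn1 : Tendsto (fun j => ‖xs - x (σ j + 1)‖) atTop (𝓝 0) := by
      have h5 : (fun j => ‖xs - x (σ j + 1)‖) = fun j => dist (x (σ j + 1)) xs :=
        funext fun j => by rw [dist_eq_norm, norm_sub_rev]
      rw [h5]
      exact tendsto_iff_dist_tendsto_zero.mp hx1conv
    have hn2 : Tendsto (fun j => ‖xs - x (σ j)‖^2) atTop (𝓝 0) := by
      have h5 : (fun j => ‖xs - x (σ j)‖) = fun j => dist (x (σ j)) xs :=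
        funext fun j => by rw [dist_eq_norm, norm_sub_rev]
      have h6 : Tendsto (fun j => ‖xs - x (σ j)‖) atTop (𝓝 0) := by
        rw [h5]; exact tendsto_iff_dist_tendsto_zero.mp hconv
      have := h6.pow 2
      simpa using this
    have hRtend : Tendsto (fun j => f (x (σ j + 1)) + (φ xs).toReal
        + G * ‖xs - x (σ j + 1)‖ + Γ/2 * ‖xs - x (σ j)‖^2) atTop
        (𝓝 (f xs + (φ xs).toReal + G * 0 + Γ/2 * 0)) := by
      exact ((((hf.continuous.tendsto xs).comp hx1conv).add tendsto_const_nhds).add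
        (hn1.const_mul G)).add (hn2.const_mul (Γ/2))
    have hFsR : ∀ᶠ j in atTop, Fs ≤ f (x (σ j + 1)) + (φ xs).toReal
        + G * ‖xs - x (σ j + 1)‖ + Γ/2 * ‖xs - x (σ j)‖^2 := by
      filter_upwards [hballev] with j hj
      obtain ⟨h1top, hm⟩ := min_real hφbot (hfin (σ j)) ((hstep (σ j)).2.1)
      have hmin := hm xs hφxs_ne_top
      have hγj : γ (σ j) ≤ Γ := hγΓ (σ j) hj
      have hginner : (inner ℝ (gradient f (x (σ j))) (xs - x (σ j + 1)) : ℝ)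
          ≤ G * ‖xs - x (σ j + 1)‖ := by
        calc (inner ℝ (gradient f (x (σ j))) (xs - x (σ j + 1)) : ℝ)
            ≤ ‖gradient f (x (σ j))‖ * ‖xs - x (σ j + 1)‖ := real_inner_le_norm _ _
          _ ≤ G * ‖xs - x (σ j + 1)‖ :=
              mul_le_mul_of_nonneg_right (hG _ (hhalf hj)) (norm_nonneg _)
      have hdecomp : (inner ℝ (gradient f (x (σ j))) (xs - x (σ j)) : ℝ)
          = (inner ℝ (gradient f (x (σ j))) (xs - x (σ j + 1)) : ℝ)
            + (inner ℝ (gradient f (x (σ j))) (x (σ j + 1) - x (σ j)) : ℝ) := by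
        rw [← inner_add_right]; congr 1; abel
      have hγsq : γ (σ j)/2 * ‖xs - x (σ j)‖^2 ≤ Γ/2 * ‖xs - x (σ j)‖^2 := by
        nlinarith [sq_nonneg ‖xs - x (σ j)‖]
      have hFj1 : F (σ j + 1) = f (x (σ j + 1)) + (φ (x (σ j + 1))).toReal := hF _
      have hFge1 := hFge (σ j + 1)
      have hq : 0 ≤ γ (σ j)/2 * ‖x (σ j + 1) - x (σ j)‖^2 := by
        have := (hγpos (σ j)).le
        positivity
      linarith [hmin, hginner, hγsq, hq, hdecomp, hFj1, hFge1]
    have := ge_of_tendsto hRtend hFsR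
    simpa using this
  have hψxs : psi f φ xs = ((Fs : ℝ) : EReal) := by
    rw [psi_coe hφbot hφxs_ne_top]
    apply congrArg
    linarith [hφxs_real, hFs_le,
      (by rw [← EReal.coe_le_coe_iff, EReal.coe_toReal hφxs_ne_top (hφbot xs)]; exact hφxs_le :
        (φ xs).toReal ≤ Fs - f xs)]
  -- unpack the KL property
  obtain ⟨hη, -, hχcont, hχconc, hχnn, hχ0, hχd, -, U, hU, hKLi⟩ := hKL
  by_cases hterm : ∃ K, F K ≤ Fs
  -- Case A: finite termination at the limiting value
  · obtain ⟨K, hK⟩ := hterm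
    have hFK : ∀ k, K ≤ k → F k = Fs := fun k hk =>
      le_antisymm ((hFanti hk).trans hK) (hFge k)
    have hxconst : ∀ k, K ≤ k → x k = x K := by
      intro k hk
      induction k, hk using Nat.le_induction with
      | base => rfl
      | succ n hn ih =>
        have h := hdesc' n
        rw [hFK n hn, hFK (n+1) (le_trans hn (Nat.le_succ n))] at h
        have h2 : (d n)^2 ≤ 0 := by nlinarith [hδγ]
        have h3 : (d n)^2 = 0 := le_antisymm h2 (sq_nonneg _)
        have hdn : d n = 0 := by
          have := sq_eq_zero_iff.mp h3
          exact this
        have hx : x (n+1) = x n := by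
          have h4 := hd n
          rw [hdn] at h4
          have h0 : ‖x (n+1) - x n‖ = 0 := h4.symm
          rw [norm_eq_zero, sub_eq_zero] at h0
          exact h0
        rw [hx, ih]
    have hevc : ∀ᶠ j in atTop, x (σ j) = x K := by
      filter_upwards [hσtend.eventually_ge_atTop K] with j hj
      exact hxconst (σ j) hj
    have hxK : x K = xs := by
      have h1 : Tendsto (fun j => x (σ j)) atTop (𝓝 (x K)) :=
        Tendsto.congr' (by filter_upwards [hevc] with j hj; exact hj.symm) tendsto_const_nhds
      exact tendsto_nhds_unique h1 hconv
    have hev2 : (fun _ : ℕ => xs) =ᶠ[atTop] x := by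
      rw [Filter.EventuallyEq, eventually_atTop]
      exact ⟨K, fun k hk => ((hxconst k hk).trans hxK).symm⟩
    exact Tendsto.congr' hev2 tendsto_const_nhds
  -- Case B: F k > Fs for all k
  · push_neg at hterm
    -- Case B setup
    obtain ⟨Δ, hΔ⟩ : ∃ Δ : ℕ → ℝ, ∀ k, Δ k = χ (F k - Fs) := ⟨_, fun _ => rfl⟩
    set M : ℝ := 2*(L+Γ)/(δ*γmin) with hM
    have hM0 : 0 < M := div_pos (by linarith) (mul_pos halg.hdelta0 halg.hgmin)
    obtain ⟨r0, hr0pos, hr0U⟩ := Metric.nhds_basis_closedBall.mem_iff.mp hU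
    set r : ℝ := min r0 (ρ/2) with hrdef
    have hrpos : 0 < r := lt_min hr0pos (half_pos hρpos)
    have hrρ : r ≤ ρ/2 := min_le_right _ _
    have hrU : Metric.closedBall xs r ⊆ U :=
      (Metric.closedBall_subset_closedBall (min_le_left _ _)).trans hr0U
    have hχnn' : ∀ k, F k - Fs < η → 0 ≤ Δ k := by
      intro k hk
      rw [hΔ]
      exact hχnn _ ⟨sub_nonneg.mpr (hFge _), hk.le⟩
    -- the key per-step estimate
    have hkey : ∀ k, x k ∈ Metric.closedBall xs (ρ/2) → x (k+1) ∈ Metric.closedBall xs r →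
        F (k+1) - Fs < η → d (k+1) ≤ d k / 2 + M/2 * Δ (k+1) - M/2 * Δ (k+2) := by
      intro k hk hk1 hη1
      have he1pos : 0 < F (k+1) - Fs := sub_pos.mpr (hterm (k+1))
      have harg : (psi f φ (x (k+1)) - psi f φ xs).toReal = F (k+1) - Fs := by
        rw [hψF (k+1), hψxs, ← EReal.coe_sub, EReal.toReal_coe]
      have hlt1 : psi f φ xs < psi f φ (x (k+1)) := by
        rw [hψxs, hψF (k+1), EReal.coe_lt_coe_iff]; linarith
      have hlt2 : psi f φ (x (k+1)) < psi f φ xs + (η : EReal) := by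
        rw [hψxs, hψF (k+1), ← EReal.coe_add, EReal.coe_lt_coe_iff]; linarith
      have hKLk := hKLi (x (k+1)) (hrU hk1) hlt1 hlt2
      rw [harg] at hKLk
      have hvmem := subgrad_mem hf hφbot (hγpos k) (hfin k) ((hstep k).2.1)
      have hballk1 : x (k+1) ∈ Metric.closedBall xs ρ :=
        Metric.closedBall_subset_closedBall (by linarith) hk1
      have hballk : x k ∈ Metric.closedBall xs ρ := hhalf hk
      have hdist : Metric.infDist 0 (limitingSubdiff (psi f φ) (x (k+1))) ≤ (L + Γ) * d k := by
        refine le_trans (Metric.infDist_le_dist_of_mem hvmem) ?_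
        rw [dist_zero_left]
        have h1 : ‖gradient f (x (k+1)) - gradient f (x k)‖ ≤ L * d k := by
          have h := hLipB.dist_le_mul (x (k+1)) hballk1 (x k) hballk
          rw [dist_eq_norm, dist_eq_norm] at h
          rw [hd k]
          exact h
        have h2 : ‖γ k • (x (k+1) - x k)‖ ≤ Γ * d k := by
          rw [norm_smul, Real.norm_eq_abs, abs_of_pos (hγpos k), hd k]
          exact mul_le_mul_of_nonneg_right (hγΓ k hk) (norm_nonneg _)
        calc ‖gradient f (x (k+1)) - gradient f (x k) - γ k • (x (k+1) - x k)‖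
            ≤ ‖gradient f (x (k+1)) - gradient f (x k)‖ + ‖γ k • (x (k+1) - x k)‖ :=
              norm_sub_le _ _
          _ ≤ L * d k + Γ * d k := add_le_add h1 h2
          _ = (L + Γ) * d k := by ring
      have hder := hχd (F (k+1) - Fs) ⟨he1pos, hη1⟩
      have hderiv_pos : 0 < deriv χ (F (k+1) - Fs) := hder.2
      have hdkpos : 0 < d k := by
        rcases lt_or_eq_of_le (hd0 k) with h | h
        · exact h
        · exfalso
          rw [← h, mul_zero] at hdist
          have h4 : Metric.infDist 0 (limitingSubdiff (psi f φ) (x (k+1))) = 0 :=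
            le_antisymm hdist Metric.infDist_nonneg
          rw [h4, mul_zero] at hKLk
          linarith
      have he2nn : 0 ≤ F (k+2) - Fs := sub_nonneg.mpr (hFge _)
      have he2le : F (k+2) - Fs ≤ F (k+1) - Fs := sub_le_sub_right (hFsucc (k+1)) Fs
      have hΔge : deriv χ (F (k+1) - Fs) * ((F (k+1) - Fs) - (F (k+2) - Fs))
          ≤ Δ (k+1) - Δ (k+2) := by
        rcases eq_or_lt_of_le he2le with heq | hlt
        · rw [hΔ (k+1), hΔ (k+2), heq]
          simp
        · have hslope := hχconc.deriv_le_slope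
            (⟨he2nn, le_trans he2le hη1.le⟩ : F (k+2) - Fs ∈ Icc 0 η)
            (⟨he1pos.le, hη1.le⟩ : F (k+1) - Fs ∈ Icc 0 η) hlt hder.1
          rw [slope_def_field] at hslope
          rw [hΔ (k+1), hΔ (k+2)]
          have hpos2 : 0 < (F (k+1) - Fs) - (F (k+2) - Fs) := sub_pos.mpr hlt
          calc deriv χ (F (k+1) - Fs) * ((F (k+1) - Fs) - (F (k+2) - Fs))
              ≤ ((χ (F (k+1) - Fs) - χ (F (k+2) - Fs)) / ((F (k+1) - Fs) - (F (k+2) - Fs)))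
                * ((F (k+1) - Fs) - (F (k+2) - Fs)) :=
                mul_le_mul_of_nonneg_right hslope hpos2.le
            _ = χ (F (k+1) - Fs) - χ (F (k+2) - Fs) := div_mul_cancel₀ _ (ne_of_gt hpos2)
      have hdesc1 : δ*γmin/2*(d (k+1))^2 ≤ (F (k+1) - Fs) - (F (k+2) - Fs) := by
        have := hdesc' (k+1)
        linarith
      have hΔnn : 0 ≤ Δ (k+1) - Δ (k+2) :=
        le_trans (mul_nonneg hderiv_pos.le (by linarith)) hΔge
      have hsq : (d (k+1))^2 ≤ (M * (Δ (k+1) - Δ (k+2))) * d k := by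
        have h1 : deriv χ (F (k+1) - Fs) * (δ*γmin/2*(d (k+1))^2) ≤ Δ (k+1) - Δ (k+2) :=
          le_trans (mul_le_mul_of_nonneg_left hdesc1 hderiv_pos.le) hΔge
        have h2 : (d (k+1))^2 * 1
            ≤ (d (k+1))^2 * (deriv χ (F (k+1) - Fs) * ((L + Γ) * d k)) :=
          mul_le_mul_of_nonneg_left
            (le_trans hKLk (mul_le_mul_of_nonneg_left hdist hderiv_pos.le)) (sq_nonneg _)
        have hne : δ*γmin ≠ 0 := ne_of_gt (mul_pos halg.hdelta0 halg.hgmin)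
        have h3 : (d (k+1))^2 * (deriv χ (F (k+1) - Fs) * ((L + Γ) * d k))
            = (deriv χ (F (k+1) - Fs) * (δ*γmin/2*(d (k+1))^2))
              * ((L + Γ) * d k * (2/(δ*γmin))) := by
          have hinv : δ*γmin/2 * (2/(δ*γmin)) = 1 := by
            rw [div_mul_div_comm, mul_comm (δ*γmin) 2, div_self (mul_ne_zero two_ne_zero hne)]
          linear_combination (-((d (k+1))^2 * deriv χ (F (k+1) - Fs) * ((L + Γ) * d k))) * hinv
        have h4 : (deriv χ (F (k+1) - Fs) * (δ*γmin/2*(d (k+1))^2))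
              * ((L + Γ) * d k * (2/(δ*γmin)))
            ≤ (Δ (k+1) - Δ (k+2)) * ((L + Γ) * d k * (2/(δ*γmin))) := by
          apply mul_le_mul_of_nonneg_right h1
          exact mul_nonneg (mul_nonneg (by linarith) (hd0 k))
            (le_of_lt (div_pos two_pos (mul_pos halg.hdelta0 halg.hgmin)))
        have h5 : (Δ (k+1) - Δ (k+2)) * ((L + Γ) * d k * (2/(δ*γmin)))
            = (M * (Δ (k+1) - Δ (k+2))) * d k := by
          rw [hM]
          field_simp
        calc (d (k+1))^2 = (d (k+1))^2 * 1 := (mul_one _).symm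
          _ ≤ _ := h2
          _ = _ := h3
          _ ≤ _ := h4
          _ = _ := h5
      have hres := sqrt_am_gm (hd0 (k+1)) (hd0 k) (mul_nonneg hM0.le hΔnn)
        (by rw [mul_comm] at hsq; exact hsq)
      have hexp : (M * (Δ (k+1) - Δ (k+2)))/2 = M/2 * Δ (k+1) - M/2 * Δ (k+2) := by ring
      linarith [hres, hexp]
    -- choice of the starting index
    have hev1 : ∀ᶠ J in atTop, x (σ J) ∈ Metric.closedBall xs (r/4) :=
      hconv.eventually (Metric.closedBall_mem_nhds xs (by positivity))
    have hev2 : ∀ᶠ J in atTop, d (σ J) < r/4 :=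
      (hdtend.comp hσtend).eventually_lt_const (by positivity)
    have heσtend : Tendsto (fun J => F (σ J) - Fs) atTop (𝓝 0) := by
      have := (hFtend.comp hσtend).sub_const Fs
      rwa [sub_self] at this
    have hev3 : ∀ᶠ J in atTop, F (σ J) - Fs < η := heσtend.eventually_lt_const hη
    have he1tend : Tendsto (fun J => F (σ J + 1) - Fs) atTop (𝓝 0) := by
      have := (hFtend.comp ((tendsto_add_atTop_nat 1).comp hσtend)).sub_const Fs
      rwa [sub_self] at this
    have hev4 : ∀ᶠ J in atTop, M * χ (F (σ J + 1) - Fs) < r/4 := by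
      have hmem : ∀ᶠ J in atTop, (F (σ J + 1) - Fs) ∈ Icc 0 η := by
        filter_upwards [he1tend.eventually_lt_const hη] with J hJ
        exact ⟨sub_nonneg.mpr (hFge _), hJ.le⟩
      have htIcc : Tendsto (fun J => F (σ J + 1) - Fs) atTop (𝓝[Icc 0 η] 0) :=
        tendsto_nhdsWithin_iff.mpr ⟨he1tend, hmem⟩
      have hχt : Tendsto (fun J => χ (F (σ J + 1) - Fs)) atTop (𝓝 (χ 0)) :=
        (hχcont 0 ⟨le_rfl, hη.le⟩).tendsto.comp htIcc
      have hχt2 : Tendsto (fun J => M * χ (F (σ J + 1) - Fs)) atTop (𝓝 0) := by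
        have := hχt.const_mul M
        rwa [hχ0, mul_zero] at this
      exact hχt2.eventually_lt_const (by positivity)
    obtain ⟨J, h1J, h2J, h3J, h4J⟩ := (hev1.and (hev2.and (hev3.and hev4))).exists
    set k0 : ℕ := σ J with hk0def
    set k1 : ℕ := k0 + 1 with hk1def
    have hk0half : x k0 ∈ Metric.closedBall xs (ρ/2) :=
      Metric.closedBall_subset_closedBall (by linarith) h1J
    have hxk1r2 : dist (x k1) xs ≤ r/2 := by
      have hdd : dist (x k1) (x k0) = d k0 := by rw [hd k0, dist_eq_norm]
      have h1 := Metric.mem_closedBall.mp h1J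
      calc dist (x k1) xs ≤ dist (x k1) (x k0) + dist (x k0) xs := dist_triangle _ _ _
        _ = d k0 + dist (x k0) xs := by rw [hdd]
        _ ≤ r/4 + r/4 := add_le_add h2J.le h1
        _ = r/2 := by ring
    have hek1 : F k1 - Fs < η := by
      have := hFsucc k0
      linarith [h3J]
    have hMΔk1 : M * Δ k1 ≤ r/4 := by rw [hΔ]; exact h4J.le
    have hekn : ∀ n, F (k1 + n) - Fs < η := by
      intro n
      have := hFanti (Nat.le_add_right k1 n)
      linarith [hek1]
    have hΔknn : ∀ n, 0 ≤ Δ (k1 + n) := fun n => hχnn' _ (hekn n)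
    have hsum_d : ∀ n, dist (x (k1 + n)) (x k1) ≤ ∑ j ∈ Finset.range n, d (k1 + j) := by
      intro n
      have h1 := dist_le_Ico_sum_dist x (Nat.le_add_right k1 n)
      rw [dist_comm]
      refine le_trans h1 (le_of_eq ?_)
      rw [Finset.sum_Ico_eq_sum_range]
      have hnn : k1 + n - k1 = n := by omega
      rw [hnn]
      refine Finset.sum_congr rfl (fun j _ => ?_)
      rw [hd (k1 + j), dist_eq_norm, norm_sub_rev]
    -- the main induction
    have hinv : ∀ n : ℕ,
        ((∑ j ∈ Finset.range n, d (k1 + j)) + d (k0 + n)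
          ≤ d k0 + M * Δ k1 - M * Δ (k1 + n))
        ∧ x (k1 + n) ∈ Metric.closedBall xs r
        ∧ x (k0 + n) ∈ Metric.closedBall xs (ρ/2) := by
      intro n
      induction n with
      | zero =>
        refine ⟨by norm_num, ?_, by rw [Nat.add_zero]; exact hk0half⟩
        rw [Nat.add_zero, Metric.mem_closedBall]
        linarith [hxk1r2, hrpos]
      | succ n ih =>
        obtain ⟨ihsum, ihball, ihprev⟩ := ih
        have hidx1 : k0 + n + 1 = k1 + n := by omega
        have hidx2 : k0 + (n+1) = k1 + n := by omega
        have hidx4 : k1 + (n+1) = k1 + n + 1 := by omega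
        have hstepk := hkey (k0 + n) ihprev (by rw [hidx1]; exact ihball)
          (by rw [hidx1]; exact hekn n)
        have hidx5 : k0 + n + 2 = k1 + (n + 1) := by omega
        rw [hidx5, hidx1] at hstepk
        -- hstepk : d (k1 + n) ≤ d (k0 + n)/2 + M/2 * Δ (k1 + n) - M/2 * Δ (k1 + (n+1))
        have hsumnew : (∑ j ∈ Finset.range (n+1), d (k1 + j)) + d (k0 + (n+1))
            ≤ d k0 + M * Δ k1 - M * Δ (k1 + (n+1)) := by
          rw [Finset.sum_range_succ, hidx2]
          linarith [ihsum, hstepk]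
        refine ⟨hsumnew, ?_, ?_⟩
        · rw [Metric.mem_closedBall]
          have hsd := hsum_d (n+1)
          have hsumle : (∑ j ∈ Finset.range (n+1), d (k1 + j)) ≤ r/2 := by
            have hnn1 := hΔknn (n+1)
            have hnn2 := hd0 (k0 + (n+1))
            have hMΔ : 0 ≤ M * Δ (k1 + (n+1)) := mul_nonneg hM0.le hnn1
            linarith [hsumnew, hMΔk1, h2J]
          calc dist (x (k1 + (n+1))) xs
              ≤ dist (x (k1 + (n+1))) (x k1) + dist (x k1) xs := dist_triangle _ _ _
            _ ≤ (∑ j ∈ Finset.range (n+1), d (k1 + j)) + r/2 := add_le_add hsd hxk1r2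
            _ ≤ r := by linarith
        · rw [hidx2]
          exact Metric.closedBall_subset_closedBall hrρ ihball
    -- summability and conclusion
    have hsum_bound : ∀ n, ∑ j ∈ Finset.range n, d (k1 + j) ≤ d k0 + M * Δ k1 := by
      intro n
      have h := (hinv n).1
      have h2 := mul_nonneg hM0.le (hΔknn n)
      linarith [hd0 (k0 + n)]
    have hsummable : Summable d := by
      rw [← summable_nat_add_iff k1]
      refine summable_of_sum_range_le (c := d k0 + M * Δ k1) (fun n => hd0 _) (fun n => ?_)
      calc ∑ i ∈ Finset.range n, d (i + k1) = ∑ i ∈ Finset.range n, d (k1 + i) :=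
            Finset.sum_congr rfl (fun i _ => by rw [add_comm])
        _ ≤ d k0 + M * Δ k1 := hsum_bound n
    have hdistsum : Summable (fun n => dist (x n) (x (n+1))) := by
      have heq2 : (fun n => dist (x n) (x (n+1))) = d := funext fun n => by
        rw [hd n, dist_eq_norm, norm_sub_rev]
      rw [heq2]; exact hsummable
    have hcauchy : CauchySeq x := cauchySeq_of_summable_dist hdistsum
    obtain ⟨l, hl⟩ := cauchySeq_tendsto_of_complete hcauchy
    have hlxs : l = xs := tendsto_nhds_unique (hl.comp hσtend) hconv
    rwa [hlxs] at hl
end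

section
/- Let {xᵏ} be a sequence generated by the proximal gradient method and suppose Assumption A holds. Suppose some subsequence {xᵏ}_{k∈K} converges to a point x* and ψ has the KL property at x* with desingularization function of the form χ(t) = c·t^{1/2} for some c > 0. Then the sequence {ψ(xᵏ)} converges Q-linearly to ψ(x*): there exists q ∈ (0,1) such that ψ(xᵏ⁺¹) − ψ(x*) ≤ q·(ψ(xᵏ) − ψ(x*)) for all sufficiently large k. -/
open Filter Topology Set Pointwise

variable {X : Type*} [NormedAddCommGroup X] [InnerProductSpace ℝ X] [FiniteDimensional ℝ X]

/- ====================  Auxiliary lemmas  ==================== -/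

lemma inner_grad (f : X → ℝ) (z v : X) :
    (inner ℝ (gradient f z) v : ℝ) = fderiv ℝ f z v := InnerProductSpace.toDual_symm_apply

/-- Descent lemma: quadratic upper bound from a (pointwise) Lipschitz gradient bound
on a convex set. -/
lemma quad_upper (f : X → ℝ) (hf : ContDiff ℝ 1 f) (s : Set X) (hs : Convex ℝ s)
    (L : ℝ) (hL : ∀ u ∈ s, ∀ v ∈ s, ‖gradient f u - gradient f v‖ ≤ L * ‖u - v‖)
    (x y : X) (hx : x ∈ s) (hy : y ∈ s) :
    f y ≤ f x + (inner ℝ (gradient f x) (y - x) : ℝ) + L / 2 * ‖y - x‖ ^ 2 := by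
  set d := y - x with hd
  have hdiff : Differentiable ℝ f := hf.differentiable one_ne_zero
  have hmem : ∀ t ∈ Icc (0:ℝ) 1, x + t • d ∈ s := fun t ht =>
    hs.add_smul_sub_mem hx hy ht
  set g : ℝ → ℝ := fun t => f (x + t • d) - t * (inner ℝ (gradient f x) d : ℝ)
      - L / 2 * t ^ 2 * ‖d‖ ^ 2 with hg
  have hderiv : ∀ t : ℝ, HasDerivAt g
      ((inner ℝ (gradient f (x + t • d)) d : ℝ) - (inner ℝ (gradient f x) d : ℝ) - L * t * ‖d‖ ^ 2) t := by
    intro t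
    have h1 : HasDerivAt (fun t : ℝ => x + t • d) d t := by
      simpa using ((hasDerivAt_id t).smul_const d).const_add x
    have h2 : HasDerivAt (fun t : ℝ => f (x + t • d)) (fderiv ℝ f (x + t • d) d) t :=
      (hdiff (x + t • d)).hasFDerivAt.comp_hasDerivAt t h1
    rw [← inner_grad] at h2
    have h3 : HasDerivAt (fun t : ℝ => t * (inner ℝ (gradient f x) d : ℝ))
        ((inner ℝ (gradient f x) d : ℝ)) t := by
      simpa using (hasDerivAt_id t).mul_const (inner ℝ (gradient f x) d : ℝ)
    have h4 : HasDerivAt (fun t : ℝ => L / 2 * t ^ 2 * ‖d‖ ^ 2) (L * t * ‖d‖ ^ 2) t := by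
      have : HasDerivAt (fun t : ℝ => t ^ 2) (2 * t) t := by simpa using hasDerivAt_pow 2 t
      have := (this.const_mul (L / 2)).mul_const (‖d‖ ^ 2)
      rw [show L * t * ‖d‖ ^ 2 = L / 2 * (2 * t) * ‖d‖ ^ 2 by ring]; exact this
    exact (h2.sub h3).sub h4
  have key : g 1 ≤ g 0 := by
    have hcont : ContinuousOn g (Icc 0 1) :=
      (Continuous.continuousOn (by
        have : Continuous fun t : ℝ => x + t • d := by continuity
        fun_prop))
    have hanti : AntitoneOn g (Icc 0 1) := by
      apply antitoneOn_of_deriv_nonpos (convex_Icc 0 1) hcont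
        (fun t _ => (hderiv t).differentiableAt.differentiableWithinAt)
      intro t ht
      rw [interior_Icc] at ht
      rw [(hderiv t).deriv]
      have hb : ‖gradient f (x + t • d) - gradient f x‖ ≤ L * ‖t • d‖ := by
        have := hL (x + t • d) (hmem t ⟨ht.1.le, ht.2.le⟩) x hx
        simpa using this
      have hb2 : (inner ℝ (gradient f (x + t • d)) d : ℝ) - (inner ℝ (gradient f x) d : ℝ)
          ≤ L * t * ‖d‖ ^ 2 := by
        have h5 := real_inner_le_norm (gradient f (x + t • d) - gradient f x) d
        rw [inner_sub_left] at h5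
        have hn : ‖t • d‖ = t * ‖d‖ := by
          rw [norm_smul, Real.norm_eq_abs, abs_of_pos ht.1]
        rw [hn] at hb
        have h6 := mul_le_mul_of_nonneg_right hb (norm_nonneg d)
        nlinarith [h5, h6]
      linarith
    exact hanti ⟨le_rfl, zero_le_one⟩ ⟨zero_le_one, le_rfl⟩ zero_le_one
  have h1 : x + (1:ℝ) • d = y := by simp [hd]
  have h0 : x + (0:ℝ) • d = x := by simp
  simp only [hg, h1, h0, one_pow, one_mul, zero_mul, mul_zero, sub_zero, zero_pow] at key
  nlinarith [key]

/-- Convert a proxModel inequality into a real inequality. -/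
lemma prox_real (f : X → ℝ) (φ : X → EReal) (hφbot : ∀ z, φ z ≠ ⊥) (xb w z : X) (γ : ℝ)
    (hw : φ w ≠ ⊤) (hz : φ z ≠ ⊤)
    (h : proxModel f φ xb γ w ≤ proxModel f φ xb γ z) :
    (inner ℝ (gradient f xb) (w - xb) : ℝ) + γ / 2 * ‖w - xb‖ ^ 2 + (φ w).toReal ≤
    (inner ℝ (gradient f xb) (z - xb) : ℝ) + γ / 2 * ‖z - xb‖ ^ 2 + (φ z).toReal := by
  unfold proxModel at h
  rw [← EReal.coe_toReal hw (hφbot w), ← EReal.coe_toReal hz (hφbot z),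
    ← EReal.coe_add, ← EReal.coe_add, EReal.coe_le_coe_iff] at h
  linarith

lemma notTop_of_min (f : X → ℝ) (φ : X → EReal) (hφbot : ∀ z, φ z ≠ ⊥) (xb w : X) (γ : ℝ)
    (hxb : φ xb ≠ ⊤) (h : proxModel f φ xb γ w ≤ proxModel f φ xb γ xb) : φ w ≠ ⊤ := by
  intro htop
  unfold proxModel at h
  rw [htop, EReal.add_top_of_ne_bot (EReal.coe_ne_bot _),
    ← EReal.coe_toReal hxb (hφbot xb), ← EReal.coe_add] at h
  exact EReal.coe_ne_top _ (top_le_iff.mp h)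

/-- A global minimizer of the prox subproblem yields an explicit element of the
limiting subdifferential of `ψ` at the minimizer. -/
lemma frechet_of_min (f : X → ℝ) (hf : ContDiff ℝ 1 f) (φ : X → EReal) (hφbot : ∀ z, φ z ≠ ⊥)
    (xb w : X) (γ : ℝ) (hγ : 0 < γ) (hw : φ w ≠ ⊤)
    (hmin : ∀ z : X, proxModel f φ xb γ w ≤ proxModel f φ xb γ z) :
    gradient f w - gradient f xb - γ • (w - xb) ∈ limitingSubdiff (psi f φ) w := by
  set η := gradient f w - gradient f xb - γ • (w - xb) with hη
  have hfre : η ∈ frechetSubdiff (psi f φ) w := by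
    intro ε hε
    have hdiff : HasFDerivAt f (fderiv ℝ f w) w := (hf.differentiable one_ne_zero w).hasFDerivAt
    have hlo := hdiff.isLittleO.def (by positivity : (0:ℝ) < ε / 2)
    have hball : Metric.ball w (ε / γ) ∈ nhds w := Metric.ball_mem_nhds w (by positivity)
    filter_upwards [hlo, hball] with z hz1 hz2
    by_cases hzt : φ z = ⊤
    · have : psi f φ z = ⊤ := by
        unfold psi; rw [hzt]; exact EReal.add_top_of_ne_bot (EReal.coe_ne_bot _)
      rw [this]; exact le_top
    · have hm := prox_real f φ hφbot xb w z γ hw hzt (hmin z)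
      have hfz : f w + ((inner ℝ (gradient f w) (z - w) : ℝ)) - ε / 2 * ‖z - w‖ ≤ f z := by
        have h2 : ‖f z - f w - fderiv ℝ f w (z - w)‖ ≤ ε / 2 * ‖z - w‖ := hz1
        have h3 : (inner ℝ (gradient f w) (z - w) : ℝ) = fderiv ℝ f w (z - w) :=
          InnerProductSpace.toDual_symm_apply
        rw [Real.norm_eq_abs, abs_le] at h2
        rw [h3]; linarith [h2.1]
      have hid : ‖z - xb‖ ^ 2 = ‖z - w‖ ^ 2 + 2 * (inner ℝ (z - w) (w - xb) : ℝ) + ‖w - xb‖ ^ 2 := by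
        have : z - xb = (z - w) + (w - xb) := by abel
        rw [this, norm_add_sq_real]
      have hφineq : (φ w).toReal ≤ (φ z).toReal + (inner ℝ (gradient f xb) (z - w) : ℝ)
          + γ * (inner ℝ (z - w) (w - xb) : ℝ) + γ / 2 * ‖z - w‖ ^ 2 := by
        have hsplit : (inner ℝ (gradient f xb) (z - xb) : ℝ)
            = (inner ℝ (gradient f xb) (z - w) : ℝ) + (inner ℝ (gradient f xb) (w - xb) : ℝ) := by
          rw [← inner_add_right]; norm_num
        rw [hid, hsplit] at hm; nlinarith [hm]
      have hsmall : γ / 2 * ‖z - w‖ ^ 2 ≤ ε / 2 * ‖z - w‖ := by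
        have hzw : ‖z - w‖ < ε / γ := by
          rw [Metric.mem_ball, dist_eq_norm] at hz2; exact hz2
        have h0 : (0:ℝ) ≤ ‖z - w‖ := norm_nonneg _
        have h2 : ‖z - w‖ * γ < ε := (lt_div_iff₀ hγ).mp hzw
        nlinarith [mul_le_mul_of_nonneg_right h2.le h0]
      have hinner : (inner ℝ η (z - w) : ℝ) = (inner ℝ (gradient f w) (z - w) : ℝ)
          - (inner ℝ (gradient f xb) (z - w) : ℝ) - γ * (inner ℝ (w - xb) (z - w) : ℝ) := by
        rw [hη, inner_sub_left, inner_sub_left, real_inner_smul_left]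
      have hsym : (inner ℝ (w - xb) (z - w) : ℝ) = (inner ℝ (z - w) (w - xb) : ℝ) :=
        real_inner_comm _ _
      have hfinal : f w + (φ w).toReal + ((inner ℝ η (z - w) : ℝ) - ε * ‖z - w‖) ≤
          f z + (φ z).toReal := by
        rw [hinner, hsym]; linarith
      show psi f φ w + _ ≤ psi f φ z
      unfold psi
      rw [← EReal.coe_toReal hw (hφbot w), ← EReal.coe_toReal hzt (hφbot z),
        ← EReal.coe_add, ← EReal.coe_add, ← EReal.coe_add, EReal.coe_le_coe_iff]
      exact hfinal
  exact ⟨fun _ => w, fun _ => η, tendsto_const_nhds, tendsto_const_nhds, tendsto_const_nhds,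
    fun _ => hfre⟩

set_option maxHeartbeats 3000000 in
/-- with desingularization function `χ(t) = c √t`, the sequence
`{ψ(xᵏ)}` converges Q-linearly to `ψ(x*)`. -/
theorem statement15
    (f : X → ℝ) (φ : X → EReal)
    (hf : ContDiff ℝ 1 f) (hφlsc : LowerSemicontinuous φ)
    (hφbot : ∀ z : X, φ z ≠ ⊥) (hproper : ∃ z : X, φ z ≠ ⊤)
    (τ γmin γmax δ : ℝ) (x : ℕ → X) (γ : ℕ → ℝ)
    (halg : ProxGrad f φ τ γmin γmax δ x γ)
    (hA : AssumptionA f φ)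
    (xs : X) (σ : ℕ → ℕ) (hσ : StrictMono σ)
    (hconv : Tendsto (fun k => x (σ k)) atTop (nhds xs))
    (η c : ℝ) (hc : 0 < c)
    (hKL : HasKLProperty (psi f φ) xs η (fun t => c * Real.sqrt t)) :
    Tendsto (fun k => psi f φ (x k)) atTop (nhds (psi f φ xs)) ∧
    ∃ q : ℝ, 0 < q ∧ q < 1 ∧ ∀ᶠ k in atTop,
      psi f φ (x (k + 1)) - psi f φ xs ≤ (q : EReal) * (psi f φ (x k) - psi f φ xs) := by
  obtain ⟨⟨m, hm⟩, ⟨a, b, haff⟩, hlip⟩ := hA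
  have htau := halg.htau
  have hgmin := halg.hgmin
  have hgmm := halg.hgmm
  have hδ0 := halg.hdelta0
  have hδ1 := halg.hdelta1
  have hx00 := halg.hx0
  choose γ0 ii y hγ01 hγ02 hmin hacc hfirst hγeq hxeq using halg.step
  have hτpos : (0:ℝ) < τ := lt_trans one_pos htau
  have hγ0pos : ∀ k, 0 < γ0 k := fun k => lt_of_lt_of_le hgmin (hγ01 k)
  have hγge : ∀ k, γmin ≤ γ k := by
    intro k
    rw [hγeq k]
    have h1 : (1:ℝ) ≤ τ ^ ii k := one_le_pow₀ htau.le
    nlinarith only [h1, hγ01 k, hγ0pos k]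
  have hγpos : ∀ k, 0 < γ k := fun k => lt_of_lt_of_le hgmin (hγge k)
  -- all iterates are in the domain of φ
  have hφx : ∀ k, φ (x k) ≠ ⊤ := by
    intro k
    induction k with
    | zero => exact hx00
    | succ n ih =>
      rw [hxeq n]
      exact notTop_of_min f φ hφbot (x n) (y n (ii n)) (τ ^ ii n * γ0 n) ih
        (hmin n (ii n) le_rfl (x n))
  obtain ⟨r, hrkfm⟩ : ∃ r : ℕ → ℝ, ∀ k, r k = f (x k) + (φ (x k)).toReal :=
    ⟨_, fun _ => rfl⟩
  have hψr : ∀ k, psi f φ (x k) = ((r k : ℝ) : EReal) := by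
    intro k
    rw [hrkfm k]
    show (f (x k) : EReal) + φ (x k) = _
    rw [EReal.coe_add, EReal.coe_toReal (hφx k) (hφbot _)]
  have hdec : ∀ k, r (k+1) + δ * γ k / 2 * ‖x (k+1) - x k‖^2 ≤ r k := by
    intro k
    have h := hacc k
    rw [← hγeq k, ← hxeq k, hψr k, hψr (k+1), ← EReal.coe_sub, EReal.coe_le_coe_iff] at h
    linarith only [h]
  have hranti : Antitone r := by
    apply antitone_nat_of_succ_le
    intro k
    have h1 := hdec k
    nlinarith only [h1, mul_nonneg (mul_nonneg hδ0.le (hγpos k).le) (sq_nonneg ‖x (k+1) - x k‖)]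
  have hrlb : ∀ k, m ≤ r k := by
    intro k
    have := hm (x k) (hφx k)
    rw [hψr k, EReal.coe_le_coe_iff] at this
    exact this
  have hbdd : BddBelow (range r) := ⟨m, by rintro _ ⟨k, rfl⟩; exact hrlb k⟩
  obtain ⟨L, hLdef⟩ : ∃ L : ℝ, L = ⨅ k, r k := ⟨_, rfl⟩
  have hrL : Tendsto r atTop (nhds L) := by
    rw [hLdef]; exact tendsto_atTop_ciInf hranti hbdd
  have hLle : ∀ k, L ≤ r k := by
    intro k; rw [hLdef]; exact ciInf_le hbdd k
  have hΔ : ∀ k, δ * γmin / 2 * ‖x (k+1) - x k‖^2 ≤ r k - r (k+1) := by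
    intro k
    have h1 := hdec k
    have h2 : δ * γmin / 2 * ‖x (k+1) - x k‖^2 ≤ δ * γ k / 2 * ‖x (k+1) - x k‖^2 := by
      nlinarith only [mul_nonneg (mul_nonneg hδ0.le (sub_nonneg.2 (hγge k)))
        (sq_nonneg ‖x (k+1) - x k‖)]
    linarith only [h1, h2]
  have hfc : Continuous f := hf.continuous
  have hgc : Continuous (gradient f) :=
    ((InnerProductSpace.toDual ℝ X).symm.continuous).comp (hf.continuous_fderiv one_ne_zero)
  -- KL data
  obtain ⟨hη, -, -, -, -, -, -, -, U, hU, hKLineq⟩ := hKL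
  -- choice of the radius ρ
  obtain ⟨K0, t0, ht0, hlip0⟩ := hlip xs
  obtain ⟨ε1, hε1, hsub1⟩ := Metric.nhds_basis_closedBall.mem_iff.mp ht0
  obtain ⟨ε2, hε2, hsub2⟩ := Metric.nhds_basis_closedBall.mem_iff.mp hU
  obtain ⟨ρ, hρdef⟩ : ∃ ρ : ℝ, ρ = min ε1 ε2 / 3 := ⟨_, rfl⟩
  have hρ : 0 < ρ := by
    rw [hρdef]; exact div_pos (lt_min hε1 hε2) (by norm_num)
  have hB3t0 : Metric.closedBall xs (3*ρ) ⊆ t0 := by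
    refine subset_trans (Metric.closedBall_subset_closedBall ?_) hsub1
    have h1 := min_le_left ε1 ε2
    rw [hρdef]; linarith only [h1]
  have hB3U : Metric.closedBall xs (3*ρ) ⊆ U := by
    refine subset_trans (Metric.closedBall_subset_closedBall ?_) hsub2
    have h1 := min_le_right ε1 ε2
    rw [hρdef]; linarith only [h1]
  have hBρ3 : Metric.closedBall xs ρ ⊆ Metric.closedBall xs (3*ρ) :=
    Metric.closedBall_subset_closedBall (by linarith only [hρ])
  obtain ⟨Lc, hLcdef⟩ : ∃ Lc : ℝ, Lc = (K0 : ℝ) := ⟨_, rfl⟩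
  have hLc0 : 0 ≤ Lc := by rw [hLcdef]; exact K0.2
  have hLclip : ∀ u ∈ Metric.closedBall xs (3*ρ), ∀ v ∈ Metric.closedBall xs (3*ρ),
      ‖gradient f u - gradient f v‖ ≤ Lc * ‖u - v‖ := by
    intro u hu v hv
    have := (hlip0.mono hB3t0).dist_le_mul u hu v hv
    rw [hLcdef]
    rwa [dist_eq_norm, dist_eq_norm] at this
  -- bounds on the ball
  obtain ⟨M1, hM1⟩ := (isCompact_closedBall xs (3*ρ)).exists_bound_of_continuousOn
    (hfc.continuousOn (s := Metric.closedBall xs (3*ρ)))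
  obtain ⟨M2, hM2⟩ := (isCompact_closedBall xs (3*ρ)).exists_bound_of_continuousOn
    (hgc.continuousOn (s := Metric.closedBall xs (3*ρ)))
  obtain ⟨Mf, hMfdef⟩ : ∃ Mf : ℝ, Mf = max (max M1 M2) 0 := ⟨_, rfl⟩
  have hMf0 : 0 ≤ Mf := by rw [hMfdef]; exact le_max_right _ _
  have hMf : ∀ z ∈ Metric.closedBall xs (3*ρ), |f z| ≤ Mf ∧ ‖gradient f z‖ ≤ Mf := by
    intro z hz
    constructor
    · rw [hMfdef]
      exact le_trans (hM1 z hz) (le_trans (le_max_left _ _) (le_max_left _ _))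
    · rw [hMfdef]
      exact le_trans (hM2 z hz) (le_trans (le_max_right _ _) (le_max_left _ _))
  obtain ⟨Cb, hCbdef⟩ : ∃ Cb : ℝ, Cb = max (r 0 + Mf + |b| + ‖a‖*(‖xs‖+3*ρ)) 0 := ⟨_, rfl⟩
  have hCb0 : 0 ≤ Cb := by rw [hCbdef]; exact le_max_right _ _
  obtain ⟨Mb, hMbdef⟩ : ∃ Mb : ℝ, Mb = ‖a‖ + Mf := ⟨_, rfl⟩
  have hMb0 : 0 ≤ Mb := by rw [hMbdef]; positivity
  obtain ⟨Γ0, hΓ0def⟩ : ∃ Γ0 : ℝ, Γ0 = 2*(Cb/ρ + Mb)/ρ + 1 := ⟨_, rfl⟩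
  have hΓ0pos : 0 < Γ0 := by
    rw [hΓ0def]
    have h1 : 0 ≤ Cb/ρ := div_nonneg hCb0 hρ.le
    have h2 : 0 ≤ 2*(Cb/ρ + Mb)/ρ := by positivity
    linarith only [h2]
  obtain ⟨γth, hγthdef⟩ : ∃ γth : ℝ, γth = max Γ0 (Lc/(1-δ)) := ⟨_, rfl⟩
  obtain ⟨Γ, hΓdef⟩ : ∃ Γ : ℝ, Γ = max γmax (τ*γth) := ⟨_, rfl⟩
  have hΓγmax : γmax ≤ Γ := by rw [hΓdef]; exact le_max_left _ _
  have hΓpos : 0 < Γ := lt_of_lt_of_le (lt_of_lt_of_le hgmin hgmm) hΓγmax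
  have haffR : ∀ z, φ z ≠ ⊤ → (inner ℝ a z : ℝ) + b ≤ (φ z).toReal := by
    intro z hz
    have := haff z
    rw [← EReal.coe_toReal hz (hφbot z), EReal.coe_le_coe_iff] at this
    exact this
  -- acceptance holds at large trial stepsizes
  have haccept : ∀ k, x k ∈ Metric.closedBall xs ρ → ∀ j, j ≤ ii k → γth ≤ τ^j * γ0 k →
      psi f φ (y k j) ≤
        psi f φ (x k) - ((δ * (τ ^ j * γ0 k) / 2 * ‖y k j - x k‖ ^ 2 : ℝ) : EReal) := by
    intro k hk j hji hγth'
    obtain ⟨γ', hγ'def⟩ : ∃ g' : ℝ, g' = τ^j * γ0 k := ⟨_, rfl⟩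
    obtain ⟨w, hwdef⟩ : ∃ w : X, w = y k j := ⟨_, rfl⟩
    rw [← hγ'def] at hγth'
    rw [← hγ'def, ← hwdef]
    have hminj : ∀ z, proxModel f φ (x k) γ' w ≤ proxModel f φ (x k) γ' z := by
      rw [hγ'def, hwdef]; exact hmin k j hji
    have hγ'pos : 0 < γ' := by rw [hγ'def]; exact mul_pos (pow_pos hτpos j) (hγ0pos k)
    have hx3 : x k ∈ Metric.closedBall xs (3*ρ) := hBρ3 hk
    have hw_top : φ w ≠ ⊤ := notTop_of_min f φ hφbot (x k) w γ' (hφx k) (hminj (x k))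
    have hmR0 := prox_real f φ hφbot (x k) w (x k) γ' hw_top (hφx k) (hminj (x k))
    have hzero : (inner ℝ (gradient f (x k)) ((x k) - (x k)) : ℝ) = 0 := by simp
    have hzero2 : ‖(x k) - (x k)‖ = 0 := by simp
    have hmR : (inner ℝ (gradient f (x k)) (w - x k) : ℝ) + γ'/2 * ‖w - x k‖^2 + (φ w).toReal
        ≤ (φ (x k)).toReal := by
      rw [hzero, hzero2] at hmR0
      norm_num at hmR0
      rw [inner_grad, map_sub]
      linarith only [hmR0]
    have hgb : ‖gradient f (x k)‖ ≤ Mf := (hMf (x k) hx3).2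
    have hfkb : |f (x k)| ≤ Mf := (hMf (x k) hx3).1
    have hφkb : (φ (x k)).toReal ≤ r 0 - f (x k) := by
      have h1 := hranti (Nat.zero_le k)
      have h2 := hrkfm k
      have h3 := hrkfm 0
      linarith only [h1, h2, h3]
    have hxknorm : ‖x k‖ ≤ ‖xs‖ + 3*ρ := by
      have h1 : ‖x k - xs‖ ≤ 3*ρ := by
        rw [← dist_eq_norm]; exact Metric.mem_closedBall.mp hx3
      calc ‖x k‖ = ‖xs + (x k - xs)‖ := by rw [show xs + (x k - xs) = x k from by abel]
        _ ≤ ‖xs‖ + ‖x k - xs‖ := norm_add_le _ _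
        _ ≤ ‖xs‖ + 3*ρ := by linarith only [h1]
    have haxk : |(inner ℝ a (x k) : ℝ)| ≤ ‖a‖ * (‖xs‖ + 3*ρ) := by
      calc |(inner ℝ a (x k) : ℝ)| ≤ ‖a‖ * ‖x k‖ := abs_real_inner_le_norm a (x k)
        _ ≤ ‖a‖ * (‖xs‖ + 3*ρ) := mul_le_mul_of_nonneg_left hxknorm (norm_nonneg a)
    have haffw : (inner ℝ a w : ℝ) + b ≤ (φ w).toReal := haffR w hw_top
    have hainner : (inner ℝ a w : ℝ) = (inner ℝ a (x k) : ℝ) + (inner ℝ a (w - x k) : ℝ) := by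
      rw [← inner_add_right]; norm_num
    have had : |(inner ℝ a (w - x k) : ℝ)| ≤ ‖a‖ * ‖w - x k‖ := abs_real_inner_le_norm _ _
    have hgd : |(inner ℝ (gradient f (x k)) (w - x k) : ℝ)| ≤ Mf * ‖w - x k‖ := by
      calc |(inner ℝ (gradient f (x k)) (w - x k) : ℝ)|
          ≤ ‖gradient f (x k)‖ * ‖w - x k‖ := abs_real_inner_le_norm _ _
        _ ≤ Mf * ‖w - x k‖ := mul_le_mul_of_nonneg_right hgb (norm_nonneg _)
    have hqd : γ'/2 * ‖w - x k‖^2 ≤ Cb + Mb * ‖w - x k‖ := by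
      have h1 : r 0 + Mf + |b| + ‖a‖*(‖xs‖+3*ρ) ≤ Cb := by
        rw [hCbdef]; exact le_max_left _ _
      have h2 := (abs_le.mp had).1
      have h3 := (abs_le.mp hgd).1
      have h4 := (abs_le.mp haxk).1
      have h5 := (abs_le.mp hfkb).1
      have h7 : -b ≤ |b| := neg_le_abs b
      have h8 : Mb * ‖w - x k‖ = ‖a‖*‖w - x k‖ + Mf*‖w - x k‖ := by
        rw [hMbdef]; ring
      linarith only [hmR, haffw, hainner, hφkb, h1, h2, h3, h4, h5, h7, h8]
    have hd_le : ‖w - x k‖ ≤ ρ := by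
      by_contra hcon
      push_neg at hcon
      have hγ'Γ0 : Γ0 ≤ γ' :=
        le_trans (le_trans (by rw [hγthdef]; exact le_max_left _ _) hγth') le_rfl
      have hΓ0ρ : Γ0 * ρ^2 = 2*Cb + 2*Mb*ρ + ρ^2 := by
        rw [hΓ0def]
        field_simp
      have hγ'ρ2 : 2*Cb + 2*Mb*ρ + ρ^2 ≤ γ' * ρ^2 := by
        rw [← hΓ0ρ]
        exact mul_le_mul_of_nonneg_right hγ'Γ0 (sq_nonneg ρ)
      have hdn0 : 0 < ‖w - x k‖ := lt_trans hρ hcon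
      have hp1 : 0 ≤ ρ*(Cb + Mb*‖w - x k‖ - γ'/2*‖w - x k‖^2) :=
        mul_nonneg hρ.le (by linarith only [hqd])
      have hp2 : 0 ≤ ‖w - x k‖*(γ'*ρ^2 - 2*Cb - 2*Mb*ρ - ρ^2) :=
        mul_nonneg hdn0.le (by linarith only [hγ'ρ2])
      have h9 : 0 < γ'*ρ*‖w - x k‖*(‖w - x k‖ - ρ) :=
        mul_pos (mul_pos (mul_pos hγ'pos hρ) hdn0) (sub_pos.2 hcon)
      have h10 : 0 ≤ 2*Cb*(‖w - x k‖ - ρ) :=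
        mul_nonneg (by linarith only [hCb0]) (by linarith only [hcon])
      have h11 : 0 < ρ^2*‖w - x k‖ := mul_pos (pow_pos hρ 2) hdn0
      linarith only [hp1, hp2, h9, h10, h11]
    have hw3 : w ∈ Metric.closedBall xs (3*ρ) := by
      rw [Metric.mem_closedBall]
      calc dist w xs ≤ dist w (x k) + dist (x k) xs := dist_triangle _ _ _
        _ ≤ ρ + ρ := by
            rw [dist_eq_norm]
            exact add_le_add hd_le (Metric.mem_closedBall.mp hk)
        _ ≤ 3*ρ := by linarith only [hρ]
    have hquad := quad_upper f hf (Metric.closedBall xs (3*ρ)) (convex_closedBall _ _)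
      Lc hLclip (x k) w hx3 hw3
    have hγδ : Lc ≤ (1-δ)*γ' := by
      have h1 : Lc/(1-δ) ≤ γ' :=
        le_trans (by rw [hγthdef]; exact le_max_right _ _) hγth'
      have h2 : (0:ℝ) < 1 - δ := by linarith only [hδ1]
      calc Lc = (Lc/(1-δ))*(1-δ) := by field_simp
        _ ≤ γ'*(1-δ) := mul_le_mul_of_nonneg_right h1 h2.le
        _ = (1-δ)*γ' := by ring
    have hfinal : f w + (φ w).toReal ≤ f (x k) + (φ (x k)).toReal
        - δ * γ' / 2 * ‖w - x k‖^2 := by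
      nlinarith only [hmR, hquad, mul_nonneg (by linarith only [hγδ] : (0:ℝ) ≤ γ' - Lc - δ*γ')
        (sq_nonneg ‖w - x k‖)]
    rw [hψr k,
      show psi f φ w = ((f w + (φ w).toReal : ℝ) : EReal) by
        show (f w : EReal) + φ w = _
        rw [EReal.coe_add, EReal.coe_toReal hw_top (hφbot _)],
      ← EReal.coe_sub, EReal.coe_le_coe_iff]
    have h2 := hrkfm k
    linarith only [hfinal, h2]
  -- bounded stepsizes near xs
  have hγbound : ∀ k, x k ∈ Metric.closedBall xs ρ → γ k ≤ Γ := by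
    intro k hk
    rcases Nat.eq_zero_or_pos (ii k) with h0 | hpos
    · rw [hγeq k, h0]
      simpa using le_trans (hγ02 k) hΓγmax
    · by_contra hcon
      push_neg at hcon
      obtain ⟨n, hn⟩ : ∃ n, ii k = n + 1 := ⟨ii k - 1, by omega⟩
      have hτn : γth ≤ τ^n * γ0 k := by
        have h1 : τ * γth ≤ Γ := by rw [hΓdef]; exact le_max_right _ _
        have h2 : γ k = τ * (τ^n * γ0 k) := by
          rw [hγeq k, hn, pow_succ]; ring
        have h3 : τ * γth < τ * (τ^n * γ0 k) := by
          rw [← h2]; exact lt_of_le_of_lt h1 hcon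
        exact ((mul_lt_mul_iff_right₀ hτpos).mp h3).le
      exact hfirst k n (by omega) (haccept k hk n (by omega) hτn)
  -- subsequence facts
  have hσtop : Tendsto σ atTop atTop := hσ.tendsto_atTop
  have hrσ : Tendsto (fun j => r (σ j)) atTop (nhds L) := hrL.comp hσtop
  have hσ1top : Tendsto (fun j => σ j + 1) atTop atTop :=
    tendsto_atTop_mono (fun j => Nat.le_succ (σ j)) hσtop
  have hrσ1 : Tendsto (fun j => r (σ j + 1)) atTop (nhds L) := hrL.comp hσ1top
  have hΔσn : Tendsto (fun j => ‖x (σ j + 1) - x (σ j)‖) atTop (nhds 0) := by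
    have hsq : Tendsto (fun j => ‖x (σ j + 1) - x (σ j)‖^2) atTop (nhds 0) := by
      apply squeeze_zero (fun j => sq_nonneg _)
        (g := fun j => 2/(δ*γmin) * (r (σ j) - r (σ j + 1)))
      · intro j
        have h := hΔ (σ j)
        rw [show 2/(δ*γmin) * (r (σ j) - r (σ j + 1))
            = (r (σ j) - r (σ j + 1)) / (δ*γmin/2) from by field_simp,
          le_div_iff₀ (by positivity)]
        nlinarith only [h]
      · have := (hrσ.sub hrσ1).const_mul (2/(δ*γmin))
        simpa using this
    have := hsq.sqrt
    rw [Real.sqrt_zero] at this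
    exact this.congr (fun j => Real.sqrt_sq (norm_nonneg _))
  have hΔσ : Tendsto (fun j => x (σ j + 1) - x (σ j)) atTop (nhds 0) :=
    tendsto_zero_iff_norm_tendsto_zero.mpr hΔσn
  have hxσ1 : Tendsto (fun j => x (σ j + 1)) atTop (nhds xs) := by
    have := hconv.add hΔσ
    rw [add_zero] at this
    exact this.congr (fun j => by abel)
  have hσball : ∀ᶠ j in atTop, x (σ j) ∈ Metric.closedBall xs ρ :=
    hconv.eventually_mem (Metric.closedBall_mem_nhds xs hρ)
  -- ψ(xs) ≤ L
  have hψxs_le : psi f φ xs ≤ (L : EReal) := by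
    by_contra hcc
    push_neg at hcc
    obtain ⟨β, hβ1, hβ2⟩ := EReal.lt_iff_exists_real_btwn.mp hcc
    have hβL : L < β := EReal.coe_lt_coe_iff.mp hβ1
    have hβφ : ((β - f xs : ℝ) : EReal) < φ xs := by
      by_contra hcc2
      push_neg at hcc2
      have : psi f φ xs ≤ ((f xs + (β - f xs) : ℝ) : EReal) := by
        rw [EReal.coe_add]
        exact add_le_add le_rfl hcc2
      rw [show f xs + (β - f xs) = β by ring] at this
      exact absurd (lt_of_lt_of_le hβ2 this) (lt_irrefl _)
    have hev1 := hφlsc xs _ hβφ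
    have hev2 : ∀ᶠ z in nhds xs, f xs - (β - L)/2 < f z :=
      (hfc.tendsto xs).eventually (eventually_gt_nhds (by linarith only [hβL]))
    have hev3 := hconv.eventually (hev1.and hev2)
    have hev4 : ∀ᶠ j in atTop, r (σ j) < f xs + (β - f xs) - (β - L)/2 :=
      hrσ.eventually (eventually_lt_nhds (by linarith only [hβL]))
    obtain ⟨j, ⟨hj1, hj2⟩, hj3⟩ := (hev3.and hev4).exists
    have hφj : β - f xs < (φ (x (σ j))).toReal := by
      rw [← EReal.coe_toReal (hφx (σ j)) (hφbot _), gt_iff_lt, EReal.coe_lt_coe_iff] at hj1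
      exact hj1
    have h5 := hrkfm (σ j)
    linarith only [hφj, hj2, hj3, h5]
  have hφxs : φ xs ≠ ⊤ := by
    intro htop
    have : psi f φ xs = ⊤ := by
      show (f xs : EReal) + φ xs = ⊤
      rw [htop]; exact EReal.add_top_of_ne_bot (EReal.coe_ne_bot _)
    rw [this] at hψxs_le
    exact EReal.coe_ne_top L (top_le_iff.mp hψxs_le)
  obtain ⟨ψs, hψsdef⟩ : ∃ ψs : ℝ, ψs = f xs + (φ xs).toReal := ⟨_, rfl⟩
  have hψxs_eq : psi f φ xs = ((ψs : ℝ) : EReal) := by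
    rw [hψsdef]
    show (f xs : EReal) + φ xs = _
    rw [EReal.coe_add, EReal.coe_toReal hφxs (hφbot _)]
  have hψsL : ψs ≤ L := by
    rw [hψxs_eq, EReal.coe_le_coe_iff] at hψxs_le
    exact hψxs_le
  -- L ≤ ψs via the subsequence
  have hLψs : L ≤ ψs := by
    obtain ⟨D, hDdef⟩ : ∃ D : ℕ → ℝ, ∀ j, D j = f (x (σ j + 1)) + Mf * ‖x (σ j + 1) - x (σ j)‖
        + Mf * ‖xs - x (σ j)‖ + Γ/2 * ‖xs - x (σ j)‖^2 + (φ xs).toReal := ⟨_, fun _ => rfl⟩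
    have hrule : ∀ᶠ j in atTop, r (σ j + 1) ≤ D j := by
      filter_upwards [hσball] with j hj
      have hγΓ : γ (σ j) ≤ Γ := hγbound (σ j) hj
      have hγp := hγpos (σ j)
      have hxj3 : x (σ j) ∈ Metric.closedBall xs (3*ρ) := hBρ3 hj
      have hgb : ‖gradient f (x (σ j))‖ ≤ Mf := (hMf _ hxj3).2
      have hminj : proxModel f φ (x (σ j)) (γ (σ j)) (x (σ j + 1))
          ≤ proxModel f φ (x (σ j)) (γ (σ j)) xs := by
        rw [hγeq (σ j), hxeq (σ j)]
        exact hmin (σ j) (ii (σ j)) le_rfl xs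
      have hmj := prox_real f φ hφbot (x (σ j)) (x (σ j + 1)) xs (γ (σ j))
        (hφx (σ j + 1)) hφxs hminj
      have h4 : |(inner ℝ (gradient f (x (σ j))) (x (σ j + 1) - x (σ j)) : ℝ)|
          ≤ Mf * ‖x (σ j + 1) - x (σ j)‖ := by
        calc _ ≤ ‖gradient f (x (σ j))‖ * ‖x (σ j + 1) - x (σ j)‖ :=
              abs_real_inner_le_norm _ _
          _ ≤ Mf * ‖x (σ j + 1) - x (σ j)‖ := mul_le_mul_of_nonneg_right hgb (norm_nonneg _)
      have h5 : |(inner ℝ (gradient f (x (σ j))) (xs - x (σ j)) : ℝ)|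
          ≤ Mf * ‖xs - x (σ j)‖ := by
        calc _ ≤ ‖gradient f (x (σ j))‖ * ‖xs - x (σ j)‖ := abs_real_inner_le_norm _ _
          _ ≤ Mf * ‖xs - x (σ j)‖ := mul_le_mul_of_nonneg_right hgb (norm_nonneg _)
      have h6 := abs_le.mp h4
      have h7 := abs_le.mp h5
      have h8 : γ (σ j)/2 * ‖xs - x (σ j)‖^2 ≤ Γ/2 * ‖xs - x (σ j)‖^2 := by
        nlinarith only [sq_nonneg ‖xs - x (σ j)‖, mul_nonneg (sub_nonneg.2 hγΓ)
          (sq_nonneg ‖xs - x (σ j)‖)]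
      have h9 : 0 ≤ γ (σ j)/2 * ‖x (σ j + 1) - x (σ j)‖^2 := by positivity
      rw [hDdef j, hrkfm (σ j + 1)]
      linarith only [hmj, h6.1, h7.2, h8, h9]
    have hDlim : Tendsto D atTop
        (nhds (f xs + Mf * 0 + Mf * 0 + Γ/2 * 0^2 + (φ xs).toReal)) := by
      have hf1 : Tendsto (fun j => f (x (σ j + 1))) atTop (nhds (f xs)) :=
        (hfc.tendsto xs).comp hxσ1
      have hn1 : Tendsto (fun j => ‖xs - x (σ j)‖) atTop (nhds 0) := by
        have h1 := (tendsto_const_nhds (x := xs) (f := atTop (α := ℕ))).sub hconv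
        rw [sub_self] at h1
        have h2 := h1.norm
        rwa [norm_zero] at h2
      have := ((((hf1.add ((tendsto_const_nhds (x := Mf)).mul hΔσn)).add
        ((tendsto_const_nhds (x := Mf)).mul hn1)).add
        ((tendsto_const_nhds (x := Γ/2)).mul (hn1.pow 2))).add
        (tendsto_const_nhds (x := (φ xs).toReal)))
      exact this.congr (fun j => (hDdef j).symm)
    have hfin : L ≤ f xs + Mf * 0 + Mf * 0 + Γ/2 * 0^2 + (φ xs).toReal :=
      le_of_tendsto_of_tendsto hrσ1 hDlim hrule
    rw [hψsdef]
    linarith only [hfin]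
  have hLψs_eq : ψs = L := le_antisymm hψsL hLψs
  have hψs : psi f φ xs = ((L : ℝ) : EReal) := by rw [hψxs_eq, hLψs_eq]
  -- the constants for the linear rate
  have hLcΓ : 0 < Lc + Γ := by linarith only [hLc0, hΓpos]
  obtain ⟨A, hAdef⟩ : ∃ A : ℝ, A = 2*c^2*(Lc+Γ)^2/(δ*γmin) := ⟨_, rfl⟩
  have hA0 : 0 < A := by rw [hAdef]; positivity
  have hA4 : (0:ℝ) < A + 4 := by linarith only [hA0]
  obtain ⟨q, hqdef⟩ : ∃ q : ℝ, q = A/(A+4) := ⟨_, rfl⟩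
  have hq0 : 0 < q := by rw [hqdef]; exact div_pos hA0 hA4
  have hq1 : q < 1 := by
    rw [hqdef, div_lt_one hA4]; linarith only []
  -- the KL-based one-step estimate
  have htoR : ∀ k, (psi f φ (x k) - psi f φ xs).toReal = r k - L := by
    intro k
    rw [hψr k, hψs, ← EReal.coe_sub, EReal.toReal_coe]
  have hKLstep : ∀ k, x k ∈ Metric.closedBall xs ρ → x (k+1) ∈ Metric.closedBall xs ρ →
      r k - L < η → r (k+1) - L ≤ q * (r k - L) := by
    intro k hk hk1 hklt
    have ht0' : 0 ≤ r (k+1) - L := by linarith only [hLle (k+1)]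
    rcases eq_or_lt_of_le ht0' with ht' | ht'
    · rw [← ht']
      have h1 : 0 ≤ r k - L := by linarith only [hLle k]
      positivity
    · have hrk1k : r (k+1) ≤ r k := hranti (Nat.le_succ k)
      have hminK : ∀ z, proxModel f φ (x k) (γ k) (x (k+1)) ≤ proxModel f φ (x k) (γ k) z := by
        intro z
        rw [hγeq k, hxeq k]
        exact hmin k (ii k) le_rfl z
      have hηmem := frechet_of_min f hf φ hφbot (x k) (x (k+1)) (γ k) (hγpos k)
        (hφx (k+1)) hminK
      have hlt1 : psi f φ xs < psi f φ (x (k+1)) := by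
        rw [hψs, hψr (k+1)]
        exact EReal.coe_lt_coe_iff.mpr (by linarith only [ht'])
      have hlt2 : psi f φ (x (k+1)) < psi f φ xs + (η : EReal) := by
        rw [hψs, hψr (k+1), ← EReal.coe_add]
        exact EReal.coe_lt_coe_iff.mpr (by linarith only [hrk1k, hklt])
      have hkl := hKLineq (x (k+1)) (hB3U (hBρ3 hk1)) hlt1 hlt2
      rw [htoR (k+1)] at hkl
      have hst : 0 < Real.sqrt (r (k+1) - L) := Real.sqrt_pos.2 ht'
      have hderiv : deriv (fun t => c * Real.sqrt t) (r (k+1) - L)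
          = c * (1/(2*Real.sqrt (r (k+1) - L))) :=
        ((Real.hasDerivAt_sqrt (ne_of_gt ht')).const_mul c).deriv
      rw [hderiv] at hkl
      obtain ⟨Dd, hDddef⟩ : ∃ Dd : ℝ,
          Dd = Metric.infDist 0 (limitingSubdiff (psi f φ) (x (k+1))) := ⟨_, rfl⟩
      rw [← hDddef] at hkl
      have hD0 : 0 ≤ Dd := by rw [hDddef]; exact Metric.infDist_nonneg
      have hDle : Dd ≤ ‖gradient f (x (k+1)) - gradient f (x k) - γ k • (x (k+1) - x k)‖ := by
        rw [hDddef]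
        have := Metric.infDist_le_dist_of_mem (x := (0:X)) hηmem
        rwa [dist_zero_left] at this
      have hηle : ‖gradient f (x (k+1)) - gradient f (x k) - γ k • (x (k+1) - x k)‖
          ≤ (Lc + Γ) * ‖x (k+1) - x k‖ := by
        have h1 := norm_sub_le (gradient f (x (k+1)) - gradient f (x k))
          (γ k • (x (k+1) - x k))
        have h2 := hLclip (x (k+1)) (hBρ3 hk1) (x k) (hBρ3 hk)
        have h3 : ‖γ k • (x (k+1) - x k)‖ = γ k * ‖x (k+1) - x k‖ := by
          rw [norm_smul, Real.norm_eq_abs, abs_of_pos (hγpos k)]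
        have h4 : γ k ≤ Γ := hγbound k hk
        nlinarith only [norm_nonneg (x (k+1) - x k), hγpos k, h1, h2, h3,
          mul_nonneg (sub_nonneg.2 h4) (norm_nonneg (x (k+1) - x k))]
      have h2' : 2*Real.sqrt (r (k+1) - L) ≤ c * Dd := by
        have hmul := mul_le_mul_of_nonneg_left hkl
          (by positivity : (0:ℝ) ≤ 2*Real.sqrt (r (k+1) - L))
        have heq : 2*Real.sqrt (r (k+1) - L) * (c * (1/(2*Real.sqrt (r (k+1) - L))) * Dd)
            = c * Dd := by
          field_simp
        rw [mul_one, heq] at hmul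
        exact hmul
      have hchain : 2*Real.sqrt (r (k+1) - L) ≤ c*((Lc+Γ)*‖x (k+1) - x k‖) :=
        le_trans h2' (mul_le_mul_of_nonneg_left (le_trans hDle hηle) hc.le)
      have hsq : 4*(r (k+1) - L) ≤ c^2*(Lc+Γ)^2*‖x (k+1) - x k‖^2 := by
        nlinarith only [Real.sq_sqrt ht0', hchain, Real.sqrt_nonneg (r (k+1) - L), hc]
      have hΔb : δ*γmin/2*‖x (k+1) - x k‖^2 ≤ (r k - L) - (r (k+1) - L) := by
        have h1 := hΔ k; linarith only [h1]
      have hAs : c^2*(Lc+Γ)^2*‖x (k+1) - x k‖^2 ≤ A*((r k - L) - (r (k+1) - L)) := by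
        have hδγ : (0:ℝ) < δ*γmin := by positivity
        have hAe : A*(δ*γmin) = 2*(c^2*(Lc+Γ)^2) := by
          rw [hAdef]; field_simp
        nlinarith only [mul_le_mul_of_nonneg_left hΔb hA0.le, hAe, hΔb, hδγ, hA0,
          mul_nonneg (mul_nonneg (sq_nonneg c) (sq_nonneg (Lc+Γ)))
            (sq_nonneg ‖x (k+1) - x k‖)]
      have h7 : (A+4)*(r (k+1) - L) ≤ A*(r k - L) := by linarith only [hsq, hAs]
      rw [hqdef, div_mul_eq_mul_div, le_div_iff₀ hA4]
      linarith only [h7]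
  -- choice of the starting index K
  obtain ⟨q', hq'def⟩ : ∃ q' : ℝ, q' = Real.sqrt q := ⟨_, rfl⟩
  have hq'0 : 0 < q' := by rw [hq'def]; exact Real.sqrt_pos.2 hq0
  have hq'1 : q' < 1 := by
    rw [hq'def, show (1:ℝ) = Real.sqrt 1 from (Real.sqrt_one).symm]
    exact Real.sqrt_lt_sqrt hq0.le hq1
  have h1q' : 0 < 1 - q' := by linarith only [hq'1]
  have he1 : ∀ᶠ j in atTop, dist (x (σ j)) xs ≤ ρ/2 := by
    have := hconv.eventually_mem (Metric.closedBall_mem_nhds xs (by positivity : 0 < ρ/2))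
    filter_upwards [this] with j hj
    exact Metric.mem_closedBall.mp hj
  have he2 : ∀ᶠ j in atTop, r (σ j) - L < η := by
    have := hrσ.eventually (eventually_lt_nhds (show L < L + η by linarith only [hη]))
    filter_upwards [this] with j hj
    linarith only [hj]
  have he3 : ∀ᶠ j in atTop, Real.sqrt (2*(r (σ j) - L)/(δ*γmin)) ≤ (1 - q')*(ρ/2) := by
    have hs : Tendsto (fun j => 2*(r (σ j) - L)/(δ*γmin)) atTop (nhds 0) := by
      have := ((hrσ.sub_const L).const_mul 2).div_const (δ*γmin)
      simpa using this
    have := hs.sqrt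
    rw [Real.sqrt_zero] at this
    exact this.eventually (eventually_le_nhds (by positivity))
  obtain ⟨j0, hj1, hj2, hj3⟩ := (he1.and (he2.and he3)).exists
  obtain ⟨K, hKdef⟩ : ∃ K : ℕ, K = σ j0 := ⟨_, rfl⟩
  rw [← hKdef] at hj1 hj2 hj3
  obtain ⟨s0, hs0def⟩ : ∃ s0 : ℝ, s0 = Real.sqrt (2*(r K - L)/(δ*γmin)) := ⟨_, rfl⟩
  rw [← hs0def] at hj3
  have hs00 : 0 ≤ s0 := by rw [hs0def]; exact Real.sqrt_nonneg _
  have htK0 : 0 ≤ r K - L := by linarith only [hLle K]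
  have hs0sq : s0^2 = 2*(r K - L)/(δ*γmin) := by
    rw [hs0def]
    exact Real.sq_sqrt (div_nonneg (by linarith only [htK0]) (by positivity))
  have hfrac_le : ∀ n : ℕ, s0 * ((1-q'^n)/(1-q')) ≤ ρ/2 := by
    intro n
    have hq'n0 : 0 ≤ q'^n := pow_nonneg hq'0.le n
    have h1 : (1-q'^n)/(1-q') ≤ 1/(1-q') := by gcongr <;> linarith only [hq'n0, h1q']
    have h2 : s0 * ((1-q'^n)/(1-q')) ≤ s0 * (1/(1-q')) :=
      mul_le_mul_of_nonneg_left h1 hs00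
    have h3 : s0 * (1/(1-q')) ≤ ((1-q')*(ρ/2)) * (1/(1-q')) :=
      mul_le_mul_of_nonneg_right hj3 (by positivity)
    have h4 : ((1-q')*(ρ/2)) * (1/(1-q')) = ρ/2 := by
      field_simp
    linarith only [h2, h3, h4]
  -- the capture induction
  have hind : ∀ j : ℕ, dist (x (K + j)) xs ≤ ρ/2 + s0 * ((1-q'^j)/(1-q')) ∧
      r (K + j) - L ≤ q^j * (r K - L) := by
    intro j
    induction j with
    | zero =>
      constructor
      · simpa using hj1
      · simp
    | succ n ih =>
      obtain ⟨ihp, ihv⟩ := ih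
      have hxn : x (K+n) ∈ Metric.closedBall xs ρ := by
        rw [Metric.mem_closedBall]
        have h1 := hfrac_le n
        linarith only [ihp, h1]
      have hq'n0 : 0 ≤ q'^n := pow_nonneg hq'0.le n
      have hqn0 : 0 ≤ q^n := pow_nonneg hq0.le n
      have hq'sq : (q'^n)^2 = q^n := by
        rw [hq'def, pow_right_comm, Real.sq_sqrt hq0.le]
      have hΔle : ‖x (K+n+1) - x (K+n)‖ ≤ s0 * q'^n := by
        have h1 : ‖x (K+n+1) - x (K+n)‖^2 ≤ (s0*q'^n)^2 := by
          have h2 := hΔ (K+n)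
          have h4 : (s0*q'^n)^2 = 2*(r K - L)/(δ*γmin) * q^n := by
            rw [mul_pow, hs0sq, hq'sq]
          rw [h4, div_mul_eq_mul_div, le_div_iff₀ (by positivity)]
          linarith only [h2, ihv, hLle (K+n+1)]
        calc ‖x (K+n+1) - x (K+n)‖
            = Real.sqrt (‖x (K+n+1) - x (K+n)‖^2) := (Real.sqrt_sq (norm_nonneg _)).symm
          _ ≤ Real.sqrt ((s0*q'^n)^2) := Real.sqrt_le_sqrt h1
          _ = s0*q'^n := Real.sqrt_sq (by positivity)
      have hposn1 : dist (x (K+n+1)) xs ≤ ρ/2 + s0 * ((1-q'^(n+1))/(1-q')) := by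
        have htri := dist_triangle (x (K+n+1)) (x (K+n)) xs
        rw [dist_eq_norm (x (K+n+1)) (x (K+n))] at htri
        have halg2 : s0 * ((1-q'^n)/(1-q')) + s0 * q'^n = s0 * ((1-q'^(n+1))/(1-q')) := by
          rw [pow_succ]
          field_simp
          ring
        linarith only [htri, ihp, hΔle, halg2]
      refine ⟨hposn1, ?_⟩
      have hxn1 : x (K+n+1) ∈ Metric.closedBall xs ρ := by
        rw [Metric.mem_closedBall]
        have h1 := hfrac_le (n+1)
        linarith only [hposn1, h1]
      have hklt : r (K+n) - L < η := by
        have h5 : q^n * (r K - L) ≤ r K - L :=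
          mul_le_of_le_one_left htK0 (pow_le_one₀ hq0.le hq1.le)
        linarith only [h5, ihv, hj2]
      have hstep := hKLstep (K+n) hxn hxn1 hklt
      calc r (K+n+1) - L ≤ q*(r (K+n) - L) := hstep
        _ ≤ q*(q^n*(r K - L)) := mul_le_mul_of_nonneg_left ihv hq0.le
        _ = q^(n+1)*(r K - L) := by ring
  constructor
  · -- convergence of the function values
    have h1 : Tendsto (fun k => ((r k : ℝ) : EReal)) atTop (nhds ((L : ℝ) : EReal)) :=
      EReal.tendsto_coe.mpr hrL
    rw [hψs]
    exact h1.congr (fun k => (hψr k).symm)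
  · refine ⟨q, hq0, hq1, ?_⟩
    rw [eventually_atTop]
    refine ⟨K, fun k hk => ?_⟩
    obtain ⟨j, rfl⟩ := Nat.exists_eq_add_of_le hk
    have hxk : x (K+j) ∈ Metric.closedBall xs ρ := by
      rw [Metric.mem_closedBall]
      linarith only [(hind j).1, hfrac_le j]
    have hxk1 : x (K+j+1) ∈ Metric.closedBall xs ρ := by
      rw [Metric.mem_closedBall]
      have h6 := (hind (j+1)).1
      rw [← Nat.add_assoc] at h6
      linarith only [h6, hfrac_le (j+1)]
    have hklt : r (K+j) - L < η := by
      have h5 : q^j * (r K - L) ≤ r K - L :=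
        mul_le_of_le_one_left htK0 (pow_le_one₀ hq0.le hq1.le)
      linarith only [h5, (hind j).2, hj2]
    have hstep := hKLstep (K+j) hxk hxk1 hklt
    rw [hψr, hψr, hψs, ← EReal.coe_sub, ← EReal.coe_sub, ← EReal.coe_mul,
      EReal.coe_le_coe_iff]
    exact hstep
end
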